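/- arXiv:1810.02304 — 6 statements merged into one kernel-verified Lean document; each statement's English description precedes it below -/
import Mathlib

section
/- For every node v of a finite tree T, the eccentricity of v equals the distance from v to the center of T plus the radius of T; that is, ecc_T(v) = dist_T(v, C(T)) + rad(T), where C(T) is the set of vertices of minimum eccentricity. -/
noncomputable def ecc {V : Type*} [Fintype V] (T : SimpleGraph V) (v : V) : ℕ :=
  Finset.univ.sup fun u => T.dist v u

noncomputable def trad {V : Type*} [Fintype V] (T : SimpleGraph V) : ℕ :=
  sInf (Set.range (ecc T))

noncomputable def center {V : Type*} [Fintype V] (T : SimpleGraph V) : Set V :=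
  {v | ecc T v = trad T}

/-!
Let `c` be a central vertex nearest to `v`. The triangle inequality gives
`ecc v ≤ d(v, c) + rad`. Conversely, if `v ≠ c`, the neighbour `w` of `c` towards `v` is nearer
to `v`, hence not central, so some `u` has `d(w, u) > rad ≥ d(c, u)`: `u` lies on the `c` side of
the edge `wc` and `v` on its `w` side. Every edge of a tree is a bridge, so a geodesic from `v` to
`u` crosses `wc`, whence `d(v, u) = d(v, c) + d(c, u) = d(v, c) + rad`.
-/

namespace SimpleGraph

variable {V : Type*} {G : SimpleGraph V} {u v w x c : V}

lemma Walk.dist_add_dist_of_mem_support {p : G.Walk u v} (hp : p.length = G.dist u v)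
    (hx : x ∈ p.support) : G.dist u x + G.dist x v = G.dist u v := by
  classical
  rw [← length_eq_dist_of_subwalk hp (p.isSubwalk_takeUntil hx),
    ← length_eq_dist_of_subwalk hp (p.isSubwalk_dropUntil hx), ← hp, ← Walk.length_append,
    p.take_spec hx]

lemma Connected.exists_adj_dist_eq_add_one (hG : G.Connected) (hne : v ≠ c) :
    ∃ w, G.Adj c w ∧ G.dist v c = G.dist v w + 1 := by
  obtain ⟨p, hp⟩ := hG.exists_walk_length_eq_dist c v
  cases p with
  | nil => exact absurd rfl hne
  | @cons _ w _ hadj q =>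
    refine ⟨w, hadj, ?_⟩
    have hq : G.dist w v ≤ q.length := dist_le q
    have htri : G.dist v c ≤ G.dist v w + G.dist w c := hG.dist_triangle
    rw [dist_eq_one_iff_adj.mpr hadj.symm] at htri
    rw [Walk.length_cons] at hp
    have := G.dist_comm (u := v) (v := w)
    have := G.dist_comm (u := v) (v := c)
    omega

lemma IsTree.dist_eq_dist_add_one_add_dist_of_adj (hG : G.IsTree) (hadj : G.Adj w c)
    (hv : G.dist v c = G.dist v w + 1) (hu : G.dist w u = G.dist c u + 1) :
    G.dist v u = G.dist v w + 1 + G.dist c u := by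
  obtain ⟨q, hq⟩ := hG.connected.exists_walk_length_eq_dist w v
  obtain ⟨p, hp⟩ := hG.connected.exists_walk_length_eq_dist v u
  obtain ⟨r, hr⟩ := hG.connected.exists_walk_length_eq_dist u c
  have hwc : G.dist w c = 1 := dist_eq_one_iff_adj.mpr hadj
  have hcross : s(w, c) ∈ (q.append (p.append r)).edges :=
    isBridge_iff_forall_walk_mem_edges.mp
      (isAcyclic_iff_forall_adj_isBridge.mp hG.isAcyclic hadj) _
  simp only [Walk.edges_append, List.mem_append] at hcross
  rcases hcross with hcq | hcp | hcr
  · have := Walk.dist_add_dist_of_mem_support hq (q.snd_mem_support_of_mem_edges hcq)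
    have := G.dist_comm (u := v) (v := w)
    have := G.dist_comm (u := v) (v := c)
    omega
  · have := Walk.dist_add_dist_of_mem_support hp (p.fst_mem_support_of_mem_edges hcp)
    omega
  · have := Walk.dist_add_dist_of_mem_support hr (r.fst_mem_support_of_mem_edges hcr)
    have := G.dist_comm (u := u) (v := w)
    have := G.dist_comm (u := u) (v := c)
    omega

end SimpleGraph

section Eccentricity

variable {V : Type*} [Fintype V] (T : SimpleGraph V)

lemma dist_le_ecc (v u : V) : T.dist v u ≤ ecc T v :=
  Finset.le_sup (Finset.mem_univ u)

lemma exists_dist_eq_ecc (v : V) : ∃ u, T.dist v u = ecc T v := by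
  obtain ⟨u, -, hu⟩ := Finset.univ.exists_mem_eq_sup ⟨v, Finset.mem_univ v⟩ (T.dist v)
  exact ⟨u, hu.symm⟩

lemma trad_le_ecc (v : V) : trad T ≤ ecc T v :=
  Nat.sInf_le ⟨v, rfl⟩

lemma center_nonempty [Nonempty V] : (center T).Nonempty :=
  Nat.sInf_mem (Set.range_nonempty (ecc T))

variable {T}

lemma ecc_le_dist_add_ecc (hT : T.Connected) (v c : V) :
    ecc T v ≤ T.dist v c + ecc T c :=
  Finset.sup_le fun u _ => hT.dist_triangle.trans (Nat.add_le_add_left (dist_le_ecc T c u) _)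

lemma dist_add_trad_le_ecc (hT : T.IsTree) {v c : V} (hc : c ∈ center T)
    (hmin : ∀ c' ∈ center T, T.dist v c ≤ T.dist v c') : T.dist v c + trad T ≤ ecc T v := by
  obtain rfl | hne := eq_or_ne v c
  · simp [trad_le_ecc]
  obtain ⟨w, hadj, hvw⟩ := hT.connected.exists_adj_dist_eq_add_one hne
  have hw : ecc T w ≠ trad T := fun hw => by have := hmin w hw; omega
  obtain ⟨u, hu⟩ := exists_dist_eq_ecc T w
  have hwu : trad T < ecc T w := (trad_le_ecc T w).lt_of_ne' hw
  have hcu : T.dist c u ≤ trad T := (dist_le_ecc T c u).trans_eq hc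
  have htri : T.dist w u ≤ T.dist w c + T.dist c u := hT.connected.dist_triangle
  rw [SimpleGraph.dist_eq_one_iff_adj.mpr hadj.symm] at htri
  have hvu := hT.dist_eq_dist_add_one_add_dist_of_adj (u := u) hadj.symm hvw (by omega)
  calc T.dist v c + trad T = T.dist v u := by omega
    _ ≤ ecc T v := dist_le_ecc T v u

end Eccentricity

theorem stmt0_general {V : Type*} [Fintype V] (T : SimpleGraph V)
    (hT : T.IsTree) (v : V) :
    ecc T v = sInf ((fun c => T.dist v c) '' center T) + trad T := by
  have : Nonempty V := ⟨v⟩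
  obtain ⟨c, hc, hc_min⟩ := Nat.sInf_mem ((center_nonempty T).image fun c => T.dist v c)
  have hmin : ∀ c' ∈ center T, T.dist v c ≤ T.dist v c' :=
    fun c' hc' => hc_min.trans_le (Nat.sInf_le ⟨c', hc', rfl⟩)
  rw [← hc_min]
  refine le_antisymm ?_ (dist_add_trad_le_ecc hT hc hmin)
  calc ecc T v ≤ T.dist v c + ecc T c := ecc_le_dist_add_ecc hT.connected v c
    _ = T.dist v c + trad T := by rw [hc]

/-- For every node `v` of a finite tree `T`,
`ecc_T(v) = dist_T(v, C(T)) + rad(T)`. -/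
theorem stmt0 {V : Type*} [Fintype V] [Nonempty V] (T : SimpleGraph V)
    (hT : T.IsTree) (v : V) :
    ecc T v = sInf ((fun c => T.dist v c) '' center T) + trad T :=
  stmt0_general T hT v
end

section
/- Let T be a k-Steiner root of a graph G and let X be a clique-intersection of G (an intersection of a nonempty family of maximal cliques of G). Then Real(T⟨X⟩) = X and diam(T⟨X⟩) ≤ k. -/
noncomputable def setEcc {V : Type*} (T : SimpleGraph V) (S : Set V) (v : V) : ℕ :=
  sSup {d | ∃ u ∈ S, T.dist v u = d}

noncomputable def setDiam {V : Type*} (T : SimpleGraph V) (S : Set V) : ℕ :=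
  sSup {d | ∃ u ∈ S, ∃ w ∈ S, T.dist u w = d}

noncomputable def setRad {V : Type*} (T : SimpleGraph V) (S : Set V) : ℕ :=
  sInf {e | ∃ v ∈ S, setEcc T S v = e}

noncomputable def setCenter {V : Type*} (T : SimpleGraph V) (S : Set V) : Set V :=
  {v ∈ S | setEcc T S v = setRad T S}

/-- `T` is a `k`-Steiner root of `G` (via the injection `f` of the vertices of
`G` into the nodes of `T`): `T` is a tree and two distinct vertices of `G` are
adjacent iff their images are at distance at most `k` in `T`. -/
def IsSteinerRoot (k : ℕ) {α β : Type*} (G : SimpleGraph α) (T : SimpleGraph β)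
    (f : α → β) : Prop :=
  Function.Injective f ∧ T.IsTree ∧
    ∀ u v : α, u ≠ v → (G.Adj u v ↔ T.dist (f u) (f v) ≤ k)

/-- The vertex set of the smallest subtree of the tree `T` containing `X`:
all nodes lying on a path between two elements of `X`. -/
def span {β : Type*} (T : SimpleGraph β) (X : Set β) : Set β :=
  {w | ∃ u ∈ X, ∃ v ∈ X, ∃ p : T.Walk u v, p.IsPath ∧ w ∈ p.support}

def IsMaxClique {α : Type*} (G : SimpleGraph α) (K : Set α) : Prop :=
  G.IsClique K ∧ ∀ K', G.IsClique K' → K ⊆ K' → K' = K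

/-- `X` is the intersection of a nonempty family of maximal cliques of `G`. -/
def IsCliqueIntersection {α : Type*} (G : SimpleGraph α) (X : Set α) : Prop :=
  ∃ 𝒦 : Set (Set α), 𝒦.Nonempty ∧ (∀ K ∈ 𝒦, IsMaxClique G K) ∧ X = ⋂₀ 𝒦

/-!
In a tree every node on the path between `u` and `v` is no farther from any node `c` than
`max (dist c u) (dist c v)`. Hence a ball of radius `k` around `c` that contains `X` contains the
whole subtree `T⟨X⟩`. For a maximal clique `K ⊇ X`, all of `f '' K` lies within `k` of every point
of `f '' X`, so a vertex `a` with `f a ∈ T⟨f '' X⟩` is within `k` of all of `K`; maximality gives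
`a ∈ K`, and intersecting over the family gives `a ∈ X`. Applying the ball argument twice to the
clique `X` bounds the diameter.
-/

open SimpleGraph

theorem SimpleGraph.IsTree.dist_le_max_of_mem_support {β : Type*} {T : SimpleGraph β}
    (hT : T.IsTree) {u v a : β} (c : β) (p : T.Walk u v) (hp : p.IsPath) (ha : a ∈ p.support) :
    T.dist c a ≤ max (T.dist c u) (T.dist c v) := by
  classical
  obtain ⟨pu, hpu⟩ := hT.connected.exists_walk_length_eq_dist c u
  obtain ⟨pv, hpv⟩ := hT.connected.exists_walk_length_eq_dist c v
  -- `p` is the unique path, so it is the bypass of the detour through `c`.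
  have hbypass : (pu.reverse.append pv).bypass = p :=
    (hT.existsUnique_path u v).unique (Walk.bypass_isPath _) hp
  have ha' : a ∈ (pu.reverse.append pv).support :=
    Walk.support_bypass_subset_support _ (hbypass ▸ ha)
  rcases (Walk.mem_support_append_iff _ _).1 ha' with h | h
  · rw [Walk.support_reverse, List.mem_reverse] at h
    refine le_max_of_le_left ?_
    calc T.dist c a ≤ (pu.takeUntil a h).length := dist_le _
      _ ≤ pu.length := Walk.length_takeUntil_le_length _ h
      _ = T.dist c u := hpu
  · refine le_max_of_le_right ?_
    calc T.dist c a ≤ (pv.takeUntil a h).length := dist_le _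
      _ ≤ pv.length := Walk.length_takeUntil_le_length _ h
      _ = T.dist c v := hpv

section span

variable {β : Type*} {T : SimpleGraph β} {X : Set β}

theorem subset_span : X ⊆ span T X :=
  fun x hx => ⟨x, hx, x, hx, Walk.nil, Walk.IsPath.nil, Walk.start_mem_support _⟩

theorem dist_le_of_mem_span (hT : T.IsTree) {c : β} {k : ℕ} (hX : ∀ x ∈ X, T.dist c x ≤ k)
    {w : β} (hw : w ∈ span T X) : T.dist c w ≤ k := by
  obtain ⟨u, hu, v, hv, p, hp, hwp⟩ := hw
  exact (hT.dist_le_max_of_mem_support c p hp hwp).trans (max_le (hX u hu) (hX v hv))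

theorem setDiam_span_le (hT : T.IsTree) {k : ℕ} (hX : ∀ x ∈ X, ∀ y ∈ X, T.dist x y ≤ k) :
    setDiam T (span T X) ≤ k := by
  refine csSup_le' ?_
  rintro d ⟨w₁, hw₁, w₂, hw₂, rfl⟩
  have hX₂ : ∀ x ∈ X, T.dist w₂ x ≤ k := fun x hx => by
    rw [dist_comm]
    exact dist_le_of_mem_span hT (hX x hx) hw₂
  rw [dist_comm]
  exact dist_le_of_mem_span hT hX₂ hw₁

end span

namespace IsSteinerRoot

variable {k : ℕ} {α β : Type*} {G : SimpleGraph α} {T : SimpleGraph β} {f : α → β}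

theorem dist_le_of_isClique (hroot : IsSteinerRoot k G T f) {K : Set α} (hK : G.IsClique K)
    {x y : α} (hx : x ∈ K) (hy : y ∈ K) : T.dist (f x) (f y) ≤ k := by
  rcases eq_or_ne x y with rfl | hxy
  · simp
  · exact (hroot.2.2 x y hxy).1 (hK hx hy hxy)

theorem isClique_insert (hroot : IsSteinerRoot k G T f) {K : Set α} (hK : G.IsClique K)
    {a : α} (ha : ∀ b ∈ K, T.dist (f a) (f b) ≤ k) : G.IsClique (insert a K) :=
  hK.insert fun b hb hab => (hroot.2.2 a b hab).2 (ha b hb)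

theorem mem_of_mem_span (hroot : IsSteinerRoot k G T f) {K X : Set α} (hK : IsMaxClique G K)
    (hXK : X ⊆ K) {a : α} (ha : f a ∈ span T (f '' X)) : a ∈ K := by
  have hnear : ∀ b ∈ K, T.dist (f a) (f b) ≤ k := fun b hb => by
    rw [dist_comm]
    refine dist_le_of_mem_span hroot.2.1 ?_ ha
    rintro _ ⟨x, hx, rfl⟩
    exact hroot.dist_le_of_isClique hK.1 hb (hXK hx)
  rw [← hK.2 _ (hroot.isClique_insert hK.1 hnear) (Set.subset_insert a K)]
  exact Set.mem_insert a K

end IsSteinerRoot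

theorem stmt7_general {α β : Type*} (k : ℕ)
    (G : SimpleGraph α) (T : SimpleGraph β) (f : α → β)
    (hroot : IsSteinerRoot k G T f) (X : Set α)
    (hX : IsCliqueIntersection G X) :
    span T (f '' X) ∩ Set.range f = f '' X ∧
    setDiam T (span T (f '' X)) ≤ k := by
  obtain ⟨𝒦, ⟨K₀, hK₀⟩, h𝒦, rfl⟩ := hX
  have hsub : ∀ K ∈ 𝒦, ⋂₀ 𝒦 ⊆ K := fun K hK => Set.sInter_subset_of_mem hK
  refine ⟨Set.Subset.antisymm ?_ fun w hw => ⟨subset_span hw, Set.image_subset_range _ _ hw⟩, ?_⟩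
  · rintro _ ⟨hspan, a, rfl⟩
    exact ⟨a, fun K hK => hroot.mem_of_mem_span (h𝒦 K hK) (hsub K hK) hspan, rfl⟩
  · refine setDiam_span_le hroot.2.1 ?_
    rintro _ ⟨x, hx, rfl⟩ _ ⟨y, hy, rfl⟩
    exact hroot.dist_le_of_isClique ((h𝒦 K₀ hK₀).1.subset (hsub K₀ hK₀)) hx hy

/-- If `T` is a `k`-Steiner root of `G` and `X` is a clique-intersection of
`G`, then `Real(T⟨X⟩) = X` and `diam(T⟨X⟩) ≤ k`. -/
theorem stmt7 {α β : Type*} [Fintype α] [Fintype β] (k : ℕ)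
    (G : SimpleGraph α) (hG : G.Connected) (T : SimpleGraph β) (f : α → β)
    (hroot : IsSteinerRoot k G T f) (X : Set α)
    (hX : IsCliqueIntersection G X) :
    span T (f '' X) ∩ Set.range f = f '' X ∧
    setDiam T (span T (f '' X)) ≤ k :=
  stmt7_general k G T f hroot X hX
end

section
/- If a graph G admits a k-Steiner root, then G contains no chain of more than k minimal separators strictly ordered by inclusion; i.e., there is no sequence S_1 ⊂ S_2 ⊂ … ⊂ S_{k+1} of minimal separators of G. -/
/-- `S` separates the nonadjacent vertices `u, v ∉ S`: every walk from `u`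
to `v` meets `S`. -/
def IsUVSep {α : Type*} (G : SimpleGraph α) (S : Set α) (u v : α) : Prop :=
  u ∉ S ∧ v ∉ S ∧ ∀ p : G.Walk u v, ∃ w ∈ p.support, w ∈ S

/-- `S` is a minimal separator of `G`: an inclusion-minimal `uv`-separator
for some nonadjacent pair `u ≠ v`. -/
def IsMinSep {α : Type*} (G : SimpleGraph α) (S : Set α) : Prop :=
  ∃ u v : α, u ≠ v ∧ ¬ G.Adj u v ∧ IsUVSep G S u v ∧
    ∀ S' ⊂ S, ¬ IsUVSep G S' u v

/-!
Let `S` be a minimal `uv`-separator and `s, t ∈ S`. Both full components of `S` contain a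
`G`-path from a neighbour of `s` to a neighbour of `t`. Such a path crosses the middle edge `cc'`
of the tree path from `f s` to `f t` by a `G`-edge, which `f` stretches by at most `k`, so one of
its vertices is mapped close to `cc'`. If `dist (f s) (f t) ≥ k`, the close vertices of the two
full components are within `k` of each other, hence adjacent across `S`; therefore
`D = dist (f s) (f t) < k`. Then a vertex `x ∉ S` with `f x` within `D` of both `f s` and `f t` is
within `k` of the close vertex of each full component and would lie in both. So along a chain
`S₀ ⊂ ⋯ ⊂ S_k` of minimal separators the largest distance between images of separator vertices
increases at every step and reaches `k` in `S_k`.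
-/

namespace SimpleGraph

variable {β : Type*} {T : SimpleGraph β} {c c' x y : β}

/- For an edge `cc'` of a tree, `T.dist x c' = T.dist x c + 1` says that `x` lies on the side
of `c`, and `T.dist x c = T.dist x c' + 1` that it lies on the side of `c'`. -/

lemma IsTree.eq_and_eq_of_adj_of_sides (hT : T.IsTree) (hcc : T.Adj c c') (hxy : T.Adj x y)
    (hx : T.dist x c' = T.dist x c + 1) (hy : T.dist y c = T.dist y c' + 1) :
    x = c ∧ y = c' := by
  classical
  obtain ⟨p, hp⟩ := hT.connected.exists_walk_length_eq_dist x c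
  obtain ⟨q, hq⟩ := hT.connected.exists_walk_length_eq_dist y c'
  have hmem := isBridge_iff_forall_walk_mem_edges.mp (isAcyclic_iff_forall_adj_isBridge.mp
    hT.isAcyclic hcc) (p.reverse.append (.cons hxy q))
  simp only [Walk.edges_append, Walk.edges_reverse, Walk.edges_cons, List.mem_append,
    List.mem_reverse, List.mem_cons] at hmem
  rcases hmem with hmem | hmem | hmem
  · have hc' := p.snd_mem_support_of_mem_edges hmem
    have := (dist_le (p.takeUntil c' hc')).trans (p.length_takeUntil_le_length hc')
    omega
  · rcases Sym2.eq_iff.mp hmem with ⟨rfl, rfl⟩ | ⟨rfl, rfl⟩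
    · exact ⟨rfl, rfl⟩
    · simp at hx
  · have hc := q.fst_mem_support_of_mem_edges hmem
    have := (dist_le (q.takeUntil c hc)).trans (q.length_takeUntil_le_length hc)
    omega

lemma IsTree.dist_add_one_add_dist_le_length (hT : T.IsTree) (hcc : T.Adj c c') (W : T.Walk x y)
    (hx : T.dist x c' = T.dist x c + 1) (hy : T.dist y c = T.dist y c' + 1) :
    T.dist x c + 1 + T.dist y c' ≤ W.length := by
  induction W with
  | nil => omega
  | @cons x z y hxz W ih =>
    rw [Walk.length_cons]
    rcases hT.dist_eq_dist_add_one_of_adj z hcc with hz | hz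
    · obtain ⟨rfl, rfl⟩ := hT.eq_and_eq_of_adj_of_sides hcc hxz hx hz
      have := (dist_le W.reverse).trans_eq W.length_reverse
      rw [dist_self]
      omega
    · have := ih hz hy
      have := hxz.reachable.dist_triangle_left c
      rw [dist_eq_one_iff_adj.mpr hxz] at *
      omega

lemma IsTree.dist_add_one_add_dist_le (hT : T.IsTree) (hcc : T.Adj c c')
    (hx : T.dist x c' = T.dist x c + 1) (hy : T.dist y c = T.dist y c' + 1) :
    T.dist x c + 1 + T.dist y c' ≤ T.dist x y := by
  obtain ⟨W, hW⟩ := hT.connected.exists_walk_length_eq_dist x y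
  exact hW ▸ hT.dist_add_one_add_dist_le_length hcc W hx hy

lemma Connected.dist_le_dist_add_one_add_dist (hT : T.Connected) (hcc : T.Adj c c') :
    T.dist x y ≤ T.dist x c + 1 + T.dist y c' := by
  have := hT.dist_triangle (u := x) (v := c) (w := y)
  have := hT.dist_triangle (u := c) (v := c') (w := y)
  rw [dist_eq_one_iff_adj.mpr hcc, dist_comm (u := c')] at *
  omega

lemma Connected.dist_le_max_of_adj (hT : T.Connected) (hcc : T.Adj c c') {ρ ρ' σ σ' : ℕ}
    (hx : T.dist x c ≤ ρ ∨ T.dist x c' ≤ ρ') (hy : T.dist y c ≤ σ ∨ T.dist y c' ≤ σ') :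
    T.dist x y ≤ max (max (ρ + σ) (ρ' + σ')) (max (ρ + 1 + σ') (ρ' + 1 + σ)) := by
  have := hT.dist_triangle (u := x) (v := c) (w := y)
  have := hT.dist_triangle (u := x) (v := c') (w := y)
  have := hT.dist_le_dist_add_one_add_dist hcc (x := x) (y := y)
  have := hT.dist_le_dist_add_one_add_dist hcc (x := y) (y := x)
  rw [dist_comm (u := c), dist_comm (u := c'), dist_comm (u := y) (v := x)] at *
  omega

lemma dist_getVert_of_length_eq_dist (W : T.Walk x y) (hW : W.length = T.dist x y) {i : ℕ}
    (hi : i ≤ T.dist x y) :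
    T.dist x (W.getVert i) = i ∧ T.dist y (W.getVert i) = T.dist x y - i := by
  have h₁ := (dist_le (W.take i)).trans_eq (W.take_length i)
  have h₂ := (dist_le (W.drop i)).trans_eq (W.drop_length i)
  have := (W.take i).reachable.dist_triangle_left y
  rw [dist_comm (u := W.getVert i)] at h₂ this
  omega

lemma exists_adj_dist_eq_of_lt_dist {q : ℕ} (hq : q < T.dist x y) :
    ∃ c c', T.Adj c c' ∧ T.dist x c = q ∧ T.dist x c' = q + 1 ∧
      T.dist y c = T.dist x y - q ∧ T.dist y c' = T.dist x y - (q + 1) := by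
  obtain ⟨W, hW⟩ := (Reachable.of_dist_ne_zero (Nat.ne_zero_of_lt hq)).exists_walk_length_eq_dist
  obtain ⟨h₁, h₂⟩ := dist_getVert_of_length_eq_dist W hW hq.le
  obtain ⟨h₃, h₄⟩ := dist_getVert_of_length_eq_dist W hW hq
  exact ⟨_, _, W.adj_getVert_succ (hW ▸ hq), h₁, h₃, h₂, h₄⟩

end SimpleGraph

open SimpleGraph

section Separators

variable {α : Type*} {G : SimpleGraph α} {S : Set α} {u v a b s t x : α}

/-- The vertex set of the component of `G - S` containing `u`; empty if `u ∈ S`. -/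
def componentOutside (G : SimpleGraph α) (S : Set α) (u : α) : Set α :=
  {w | ∃ p : G.Walk u w, ∀ x ∈ p.support, x ∉ S}

lemma notMem_of_mem_componentOutside (ha : a ∈ componentOutside G S u) : a ∉ S := by
  obtain ⟨p, hp⟩ := ha
  exact hp a p.end_mem_support

lemma self_mem_componentOutside (hu : u ∉ S) : u ∈ componentOutside G S u :=
  ⟨.nil, by simpa using hu⟩

lemma mem_componentOutside_of_adj (ha : a ∈ componentOutside G S u) (hax : G.Adj a x)
    (hx : x ∉ S) : x ∈ componentOutside G S u := by
  obtain ⟨p, hp⟩ := ha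
  refine ⟨p.concat hax, fun y hy => ?_⟩
  rw [Walk.support_concat, List.mem_append, List.mem_singleton] at hy
  rcases hy with hy | rfl
  exacts [hp y hy, hx]

lemma exists_walk_of_mem_componentOutside (ha : a ∈ componentOutside G S u)
    (hb : b ∈ componentOutside G S u) :
    ∃ W : G.Walk a b, ∀ w ∈ W.support, w ∈ componentOutside G S u := by
  classical
  obtain ⟨p, hp⟩ := ha
  obtain ⟨q, hq⟩ := hb
  refine ⟨p.reverse.append q, fun w hw => ?_⟩
  rw [Walk.mem_support_append_iff, Walk.support_reverse, List.mem_reverse] at hw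
  rcases hw with hw | hw
  · exact ⟨p.takeUntil w hw, fun x hx => hp x (p.support_takeUntil_subset_support hw hx)⟩
  · exact ⟨q.takeUntil w hw, fun x hx => hq x (q.support_takeUntil_subset_support hw hx)⟩

lemma IsUVSep.symm (h : IsUVSep G S u v) : IsUVSep G S v u := by
  refine ⟨h.2.1, h.1, fun p => ?_⟩
  obtain ⟨w, hw, hwS⟩ := h.2.2 p.reverse
  exact ⟨w, by simpa using hw, hwS⟩

lemma IsUVSep.notMem_componentOutside (h : IsUVSep G S u v) : v ∉ componentOutside G S u :=
  fun ⟨p, hp⟩ => by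
    obtain ⟨w, hw, hwS⟩ := h.2.2 p
    exact hp w hw hwS

lemma IsUVSep.disjoint_componentOutside (h : IsUVSep G S u v) :
    Disjoint (componentOutside G S u) (componentOutside G S v) := by
  refine Set.disjoint_left.mpr fun w ⟨p, hp⟩ ⟨q, hq⟩ =>
    h.notMem_componentOutside ⟨p.append q.reverse, fun x hx => ?_⟩
  rw [Walk.mem_support_append_iff, Walk.support_reverse, List.mem_reverse] at hx
  rcases hx with hx | hx
  exacts [hp x hx, hq x hx]

def IsMinUVSep (G : SimpleGraph α) (S : Set α) (u v : α) : Prop :=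
  IsUVSep G S u v ∧ ∀ S' ⊂ S, ¬ IsUVSep G S' u v

lemma IsMinUVSep.symm (h : IsMinUVSep G S u v) : IsMinUVSep G S v u :=
  ⟨h.1.symm, fun S' hS' hsep => h.2 S' hS' hsep.symm⟩

lemma IsMinUVSep.exists_adj_mem_componentOutside (h : IsMinUVSep G S u v) (hs : s ∈ S) :
    ∃ a, G.Adj s a ∧ a ∈ componentOutside G S u := by
  have hsep := h.1
  have : ¬ IsUVSep G (S \ {s}) u v := h.2 _ (Set.sdiff_singleton_ssubset.mpr hs)
  simp only [IsUVSep, Set.mem_sdiff, hsep.1, hsep.2.1, false_and, not_false_eq_true,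
    true_and, not_forall, not_exists, not_and] at this
  obtain ⟨p, hp⟩ := this
  obtain ⟨d, hd, hfst, hsnd⟩ := p.exists_boundary_dart _ (self_mem_componentOutside hsep.1)
    hsep.notMem_componentOutside
  have hsndS : d.snd ∈ S := by_contra fun h' => hsnd (mem_componentOutside_of_adj hfst d.adj h')
  have : d.snd = s := by
    by_contra hne
    exact hp _ (p.dart_snd_mem_support_of_mem_darts hd) hsndS hne
  exact ⟨d.fst, this ▸ d.adj.symm, hfst⟩

lemma IsMinUVSep.exists_boundary_adj (h : IsMinUVSep G S u v) (hs : s ∈ S) (ht : t ∈ S)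
    (P : α → Prop) (hPs : P s) (hPt : ¬ P t) :
    ∃ z z', G.Adj z z' ∧ P z ∧ ¬ P z' ∧
      ((z = s ∧ z' ∈ componentOutside G S u) ∨
        (z ∈ componentOutside G S u ∧ z' ∈ componentOutside G S u) ∨
        (z ∈ componentOutside G S u ∧ z' = t)) := by
  obtain ⟨a₁, hsa₁, ha₁⟩ := h.exists_adj_mem_componentOutside hs
  obtain ⟨a₂, hta₂, ha₂⟩ := h.exists_adj_mem_componentOutside ht
  by_cases hPa₁ : P a₁
  swap
  · exact ⟨s, a₁, hsa₁, hPs, hPa₁, .inl ⟨rfl, ha₁⟩⟩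
  by_cases hPa₂ : P a₂
  · exact ⟨a₂, t, hta₂.symm, hPa₂, hPt, .inr (.inr ⟨ha₂, rfl⟩)⟩
  obtain ⟨W, hW⟩ := exists_walk_of_mem_componentOutside ha₁ ha₂
  obtain ⟨d, hd, hfst, hsnd⟩ := W.exists_boundary_dart {x | P x} hPa₁ hPa₂
  exact ⟨d.fst, d.snd, d.adj, hfst, hsnd, .inr (.inl
    ⟨hW _ (W.dart_fst_mem_support_of_mem_darts hd), hW _ (W.dart_snd_mem_support_of_mem_darts hd)⟩)⟩

lemma IsMinSep.exists_isMinUVSep (h : IsMinSep G S) : ∃ u v, IsMinUVSep G S u v :=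
  let ⟨u, v, _, _, hsep, hmin⟩ := h
  ⟨u, v, hsep, hmin⟩

lemma IsMinSep.nonempty (hG : G.Connected) (h : IsMinSep G S) : S.Nonempty := by
  obtain ⟨u, v, -, -, hsep, -⟩ := h
  obtain ⟨w, -, hw⟩ := hsep.2.2 (hG.preconnected u v).some
  exact ⟨w, hw⟩

end Separators

namespace IsSteinerRoot

variable {α β : Type*} {G : SimpleGraph α} {T : SimpleGraph β} {f : α → β} {k : ℕ}
  {S : Set α} {u v s t x p r : α} {c c' : β}

lemma isTree (h : IsSteinerRoot k G T f) : T.IsTree := h.2.1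

lemma dist_le_of_adj (h : IsSteinerRoot k G T f) (hpr : G.Adj p r) : T.dist (f p) (f r) ≤ k :=
  (h.2.2 p r hpr.ne).mp hpr

lemma eq_or_adj_of_dist_le (h : IsSteinerRoot k G T f) (hpr : T.dist (f p) (f r) ≤ k) :
    p = r ∨ G.Adj p r := by
  by_cases hne : p = r
  exacts [.inl hne, .inr ((h.2.2 p r hne).mpr hpr)]

lemma eq_of_dist_eq_zero (h : IsSteinerRoot k G T f) (hpr : T.dist (f p) (f r) = 0) : p = r :=
  h.1 (h.isTree.connected.dist_eq_zero_iff.mp hpr)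

lemma mem_componentOutside_of_dist_le (h : IsSteinerRoot k G T f)
    (hp : p ∈ componentOutside G S u) (hr : r ∉ S) (hpr : T.dist (f p) (f r) ≤ k) :
    r ∈ componentOutside G S u := by
  rcases h.eq_or_adj_of_dist_le hpr with rfl | hadj
  exacts [hp, mem_componentOutside_of_adj hp hadj hr]

lemma lt_dist_of_mem_componentOutside (h : IsSteinerRoot k G T f) (hsep : IsUVSep G S u v)
    (hp : p ∈ componentOutside G S u) (hr : r ∈ componentOutside G S v) :
    k < T.dist (f p) (f r) := by
  by_contra! hpr
  exact Set.disjoint_left.mp hsep.disjoint_componentOutside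
    (h.mem_componentOutside_of_dist_le hp (notMem_of_mem_componentOutside hr) hpr) hr

/- A walk from `s` to `t` through the component of `u` crosses from the side of `c` to the side
of `c'` along an edge of `G`, and that edge is stretched by at most `k` in `T`. -/
lemma exists_mem_componentOutside_near_edge (h : IsSteinerRoot k G T f)
    (hS : IsMinUVSep G S u v) (hs : s ∈ S) (ht : t ∈ S) (hcc : T.Adj c c')
    (hsc : T.dist (f s) c' = T.dist (f s) c + 1) (htc : T.dist (f t) c = T.dist (f t) c' + 1)
    {ρ ρ' : ℕ} (hρs : k ≤ T.dist (f s) c + ρ' + 1) (hρt : k ≤ T.dist (f t) c' + ρ + 1)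
    (hρρ' : k ≤ ρ + ρ' + 2) :
    ∃ p ∈ componentOutside G S u, T.dist (f p) c ≤ ρ ∨ T.dist (f p) c' ≤ ρ' := by
  obtain ⟨z, z', hzz', hz, hz', hmem⟩ := hS.exists_boundary_adj hs ht
    (fun x => T.dist (f x) c' = T.dist (f x) c + 1) hsc (by omega)
  have hz'c : T.dist (f z') c = T.dist (f z') c' + 1 :=
    (h.isTree.dist_eq_dist_add_one_of_adj (f z') hcc).resolve_right hz'
  have hcross := (h.isTree.dist_add_one_add_dist_le hcc hz hz'c).trans (h.dist_le_of_adj hzz')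
  rcases hmem with ⟨rfl, hz'C⟩ | ⟨hzC, hz'C⟩ | ⟨hzC, rfl⟩
  · exact ⟨z', hz'C, .inr (by omega)⟩
  · by_cases hzρ : T.dist (f z) c ≤ ρ
    exacts [⟨z, hzC, .inl hzρ⟩, ⟨z', hz'C, .inr (by omega)⟩]
  · exact ⟨z, hzC, .inl (by omega)⟩

lemma dist_lt_of_mem_minSep (h : IsSteinerRoot k G T f) (hS : IsMinUVSep G S u v) (hs : s ∈ S)
    (ht : t ∈ S) : T.dist (f s) (f t) < k := by
  obtain ⟨a, hsa, -⟩ := hS.exists_adj_mem_componentOutside hs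
  have hk : k ≠ 0 := fun hk =>
    hsa.ne (h.eq_of_dist_eq_zero (Nat.le_zero.mp (hk ▸ h.dist_le_of_adj hsa)))
  by_contra! hst
  obtain ⟨c, c', hcc, h₁, h₂, h₃, h₄⟩ :=
    exists_adj_dist_eq_of_lt_dist (T := T) (q := k / 2) (x := f s) (y := f t) (by omega)
  have hnear := fun {u v} (hS : IsMinUVSep G S u v) =>
    h.exists_mem_componentOutside_near_edge hS hs ht hcc (by omega) (by omega)
      (ρ := k / 2) (ρ' := k - 1 - k / 2) (by omega) (by omega) (by omega)
  obtain ⟨p, hp, hpc⟩ := hnear hS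
  obtain ⟨r, hr, hrc⟩ := hnear hS.symm
  have := h.isTree.connected.dist_le_max_of_adj hcc hpc hrc
  have := h.lt_dist_of_mem_componentOutside hS.1 hp hr
  omega

lemma mem_componentOutside_of_dist_le_dist (h : IsSteinerRoot k G T f) (hS : IsMinUVSep G S u v)
    (hs : s ∈ S) (ht : t ∈ S) (hx : x ∉ S) (hD : 0 < T.dist (f s) (f t))
    (hxs : T.dist (f x) (f s) ≤ T.dist (f s) (f t))
    (hxt : T.dist (f x) (f t) ≤ T.dist (f s) (f t)) :
    x ∈ componentOutside G S u := by
  have hDk := h.dist_lt_of_mem_minSep hS hs ht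
  set D := T.dist (f s) (f t)
  obtain ⟨c, c', hcc, h₁, h₂, h₃, h₄⟩ :=
    exists_adj_dist_eq_of_lt_dist (T := T) (q := D / 2) (x := f s) (y := f t) (by omega)
  obtain ⟨p, hp, hpc⟩ := h.exists_mem_componentOutside_near_edge hS hs ht hcc
    (by omega) (by omega) (ρ := k - D + D / 2) (ρ' := k - D / 2 - 1) (by omega) (by omega)
    (by omega)
  have hxc : T.dist (f x) c ≤ D / 2 ∨ T.dist (f x) c' ≤ D - D / 2 - 1 := by
    rcases h.isTree.dist_eq_dist_add_one_of_adj (f x) hcc with hx' | hx'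
    · have := h.isTree.dist_add_one_add_dist_le (x := f s) hcc (by omega) hx'
      rw [SimpleGraph.dist_comm (u := f s) (v := f x)] at this
      omega
    · have := h.isTree.dist_add_one_add_dist_le (y := f t) hcc hx' (by omega)
      omega
  have := h.isTree.connected.dist_le_max_of_adj hcc hpc hxc
  exact h.mem_componentOutside_of_dist_le hp hx (by omega)

lemma exists_lt_dist_of_ssubset (h : IsSteinerRoot k G T f) {S' : Set α} (hS : IsMinSep G S)
    (hSS' : S ⊂ S') (hs : s ∈ S) (ht : t ∈ S) :
    ∃ s' ∈ S', ∃ t' ∈ S', T.dist (f s) (f t) < T.dist (f s') (f t') := by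
  obtain ⟨x, hxS', hx⟩ := Set.exists_of_ssubset hSS'
  by_contra! hfar
  have hxs := hfar x hxS' s (hSS'.1 hs)
  have hxt := hfar x hxS' t (hSS'.1 ht)
  obtain ⟨u, v, hS⟩ := hS.exists_isMinUVSep
  rcases Nat.eq_zero_or_pos (T.dist (f s) (f t)) with hD | hD
  · exact hx (h.eq_of_dist_eq_zero (Nat.le_zero.mp (hD ▸ hxs)) ▸ hs)
  exact Set.disjoint_left.mp hS.1.disjoint_componentOutside
    (h.mem_componentOutside_of_dist_le_dist hS hs ht hx hD hxs hxt)
    (h.mem_componentOutside_of_dist_le_dist hS.symm hs ht hx hD hxs hxt)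

end IsSteinerRoot

theorem stmt10_general {α β : Type*} (k : ℕ)
    (G : SimpleGraph α) (hG : G.Connected) (T : SimpleGraph β) (f : α → β)
    (hroot : IsSteinerRoot k G T f) :
    ¬ ∃ Ss : Fin (k + 1) → Set α,
        (∀ i, IsMinSep G (Ss i)) ∧ ∀ i j : Fin (k + 1), i < j → Ss i ⊂ Ss j := by
  rintro ⟨Ss, hSs, hchain⟩
  have hfar : ∀ i : Fin (k + 1), ∃ s ∈ Ss i, ∃ t ∈ Ss i, (i : ℕ) ≤ T.dist (f s) (f t) := by
    refine Fin.induction ?_ fun i ⟨s, hs, t, ht, hi⟩ => ?_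
    · obtain ⟨s, hs⟩ := (hSs 0).nonempty hG
      exact ⟨s, hs, s, hs, Nat.zero_le _⟩
    · obtain ⟨s', hs', t', ht', hlt⟩ :=
        hroot.exists_lt_dist_of_ssubset (hSs _) (hchain _ _ i.castSucc_lt_succ) hs ht
      exact ⟨s', hs', t', ht', by simp only [Fin.val_succ, Fin.val_castSucc] at hi ⊢; omega⟩
  obtain ⟨s, hs, t, ht, hk⟩ := hfar (Fin.last k)
  obtain ⟨u, v, hS⟩ := (hSs (Fin.last k)).exists_isMinUVSep
  have := hroot.dist_lt_of_mem_minSep hS hs ht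
  simp only [Fin.val_last] at hk
  omega

/-- If `G` admits a `k`-Steiner root, then there is no chain of `k + 1`
minimal separators of `G` strictly ordered by inclusion. -/
theorem stmt10 {α β : Type*} [Fintype α] [Fintype β] (k : ℕ)
    (G : SimpleGraph α) (hG : G.Connected) (T : SimpleGraph β) (f : α → β)
    (hroot : IsSteinerRoot k G T f) :
    ¬ ∃ Ss : Fin (k + 1) → Set α,
        (∀ i, IsMinSep G (Ss i)) ∧ ∀ i j : Fin (k + 1), i < j → Ss i ⊂ Ss j :=
  stmt10_general k G hG T f hroot
end

section
/- Let T be a k-Steiner root of a graph G and let X be a clique-intersection of G. Then the smallest subtree T⟨X⟩ of T containing X has at most O(k·|X|) nodes; precisely, |V(T⟨X⟩)| ≤ k·|X| + 1. -/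
open SimpleGraph

namespace SimpleGraph

variable {V : Type*} {G : SimpleGraph V}

theorem Walk.IsPath.card_support_toFinset_erase_start [DecidableEq V] {u v : V}
    {p : G.Walk u v} (hp : p.IsPath) : (p.support.toFinset.erase u).card = p.length := by
  rw [Finset.card_erase_of_mem (List.mem_toFinset.mpr p.start_mem_support),
    List.toFinset_card_of_nodup hp.support_nodup, p.length_support, Nat.add_sub_cancel]

theorem IsAcyclic.support_subset_of_isPath (hG : G.IsAcyclic) {b u v : V}
    {p : G.Walk u v} (hp : p.IsPath) (q : G.Walk b u) (r : G.Walk b v) {w : V}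
    (hw : w ∈ p.support) : w ∈ q.support ∨ w ∈ r.support := by
  classical
  have hbypass : p = (q.reverse.append r).bypass :=
    congrArg Subtype.val ((hG.subsingleton_path u v).elim ⟨p, hp⟩ ⟨_, Walk.bypass_isPath _⟩)
  rw [hbypass] at hw
  simpa using (q.reverse.append r).support_bypass_subset_support hw

end SimpleGraph

section Span

variable {V : Type*} {T : SimpleGraph V}

theorem subset_span_s11 (S : Set V) : S ⊆ span T S :=
  fun s hs => ⟨s, hs, s, hs, .nil, .nil, Walk.start_mem_support _⟩

@[simp]
theorem span_empty : span T ∅ = ∅ := by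
  ext; simp [span]

theorem span_subset_iUnion_support (hT : T.IsAcyclic) {S : Set V} {b : V}
    (P : ∀ s, T.Walk b s) : span T S ⊆ ⋃ s ∈ S, {w | w ∈ (P s).support} := by
  rintro w ⟨u, hu, v, hv, p, hp, hw⟩
  rcases hT.support_subset_of_isPath hp (P u) (P v) hw with h | h
  exacts [Set.mem_biUnion hu h, Set.mem_biUnion hv h]

/-- For infinite `S` this holds because `ncard` is `0` on infinite sets, `span T S` included. -/
theorem ncard_span_le_of_dist_le (hT : T.IsTree) {S : Set V} {b : V} {k : ℕ}
    (hdist : ∀ s ∈ S, T.dist b s ≤ k) : (span T S).ncard ≤ k * S.ncard + 1 := by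
  classical
  by_cases hS : S.Finite
  swap
  · simp [(Set.Infinite.mono (subset_span_s11 S) hS).ncard]
  choose P hP hPlen using fun s => hT.connected.exists_path_of_dist b s
  have hcover : span T S ⊆
      ↑(insert b (hS.toFinset.biUnion fun s => (P s).support.toFinset.erase b)) := by
    intro w hw
    obtain ⟨s, hs, hws⟩ := Set.mem_iUnion₂.mp (span_subset_iUnion_support hT.isAcyclic P hw)
    by_cases hwb : w = b
    · simp [hwb]
    · simp only [Finset.coe_insert, Finset.coe_biUnion, Set.Finite.coe_toFinset]
      exact Or.inr (Set.mem_biUnion hs (by simpa [hwb] using hws))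
  calc (span T S).ncard
      ≤ (insert b (hS.toFinset.biUnion fun s => (P s).support.toFinset.erase b)).card := by
        rw [← Set.ncard_coe_finset]; exact Set.ncard_le_ncard hcover (Finset.finite_toSet _)
    _ ≤ ∑ s ∈ hS.toFinset, ((P s).support.toFinset.erase b).card + 1 :=
        (Finset.card_insert_le _ _).trans (by gcongr; exact Finset.card_biUnion_le)
    _ ≤ ∑ _s ∈ hS.toFinset, k + 1 := by
        gcongr with s hs
        rw [(hP s).card_support_toFinset_erase_start, hPlen s]
        exact hdist s (hS.mem_toFinset.mp hs)
    _ = k * S.ncard + 1 := by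
        rw [Finset.sum_const, smul_eq_mul, Set.ncard_eq_toFinset_card S hS, mul_comm]

end Span

theorem IsCliqueIntersection.isClique {α : Type*} {G : SimpleGraph α} {X : Set α}
    (hX : IsCliqueIntersection G X) : G.IsClique X := by
  obtain ⟨𝒦, ⟨K, hK⟩, hmax, rfl⟩ := hX
  exact (hmax K hK).1.subset (Set.sInter_subset_of_mem hK)

theorem stmt11_general {α β : Type*} (k : ℕ)
    (G : SimpleGraph α) (T : SimpleGraph β) (f : α → β)
    (hroot : IsSteinerRoot k G T f) (X : Set α)
    (hX : IsCliqueIntersection G X) :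
    (span T (f '' X)).ncard ≤ k * X.ncard + 1 := by
  obtain ⟨hinj, hT, hadj⟩ := hroot
  rcases X.eq_empty_or_nonempty with rfl | ⟨x₀, hx₀⟩
  · simp
  have hdist : ∀ y ∈ f '' X, T.dist (f x₀) y ≤ k := by
    rintro _ ⟨x, hx, rfl⟩
    by_cases h : x₀ = x
    · simp [h]
    · exact (hadj x₀ x h).mp (hX.isClique hx₀ hx h)
  simpa [Set.ncard_image_of_injective X hinj] using ncard_span_le_of_dist_le hT hdist

/-- If `T` is a `k`-Steiner root of `G` and `X` is a clique-intersection of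
`G`, then the smallest subtree of `T` containing `X` has at most
`k·|X| + 1` nodes. -/
theorem stmt11 {α β : Type*} [Fintype α] [Fintype β] (k : ℕ)
    (G : SimpleGraph α) (hG : G.Connected) (T : SimpleGraph β) (f : α → β)
    (hroot : IsSteinerRoot k G T f) (X : Set α)
    (hX : IsCliqueIntersection G X) :
    (span T (f '' X)).ncard ≤ k * X.ncard + 1 :=
  stmt11_general k G T f hroot X hX
end

section
/- Let T be a 4-Steiner root of a graph G and let X be a clique-intersection of G with X ⊊ K for some maximal clique K. If T⟨X⟩ has diameter 3, then X is contained in exactly two maximal cliques of G. -/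
/-!
Every maximal clique `K'` of `G` has a center in `T`: a node within distance `2` of all of
`f '' K'` (a Helly property of subtrees), and two maximal cliques sharing a center coincide,
since their union is then a clique. If `K' ⊇ X`, balls in a tree being convex, the center is
within `2` of all of `T⟨X⟩`, in particular of the ends `u, v` of a diametral geodesic of length
`3`; by parity of distances in a tree it then lies on that geodesic at distance `1` or `2` from
`u`. So at most two maximal cliques contain `X`, and at least two do because `X ⊊ K` is an
intersection of maximal cliques.
-/

namespace SimpleGraph

variable {V : Type*} {T : SimpleGraph V}

lemma IsTree.length_eq_dist (hT : T.IsTree) {u v : V} {p : T.Walk u v} (hp : p.IsPath) :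
    p.length = T.dist u v := by
  obtain ⟨q, hq, hql⟩ := hT.connected.exists_path_of_dist u v
  rw [(hT.existsUnique_path u v).unique hp hq, hql]

lemma IsTree.dist_add_dist_of_mem_support (hT : T.IsTree) {u v c : V} {p : T.Walk u v}
    (hp : p.IsPath) (hc : c ∈ p.support) : T.dist u c + T.dist c v = T.dist u v := by
  classical
  rw [← hT.length_eq_dist (hp.takeUntil hc), ← hT.length_eq_dist (hp.dropUntil hc),
    ← hT.length_eq_dist hp, ← Walk.length_append, p.take_spec hc]

lemma IsTree.mem_support_of_dist_add_dist (hT : T.IsTree) {u v c : V} {p : T.Walk u v}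
    (hp : p.IsPath) (hc : T.dist u c + T.dist c v = T.dist u v) : c ∈ p.support := by
  obtain ⟨q₁, -, hq₁⟩ := hT.connected.exists_path_of_dist u c
  obtain ⟨q₂, -, hq₂⟩ := hT.connected.exists_path_of_dist c v
  have hq : (q₁.append q₂).IsPath :=
    Walk.isPath_of_length_eq_dist _ (by rw [Walk.length_append]; omega)
  rw [(hT.existsUnique_path u v).unique hp hq, Walk.mem_support_append_iff]
  exact Or.inl q₁.end_mem_support

lemma IsTree.dist_add_dist_or (hT : T.IsTree) {s t c : V}
    (hc : T.dist s c + T.dist c t = T.dist s t) (x : V) :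
    T.dist x c + T.dist c s = T.dist x s ∨ T.dist x c + T.dist c t = T.dist x t := by
  classical
  obtain ⟨r₁, hr₁, -⟩ := hT.connected.exists_path_of_dist x s
  obtain ⟨r₂, hr₂, -⟩ := hT.connected.exists_path_of_dist x t
  by_cases h₁ : c ∈ r₁.support
  · exact Or.inl (hT.dist_add_dist_of_mem_support hr₁ h₁)
  by_cases h₂ : c ∈ r₂.support
  · exact Or.inr (hT.dist_add_dist_of_mem_support hr₂ h₂)
  -- the walk `s → x → t` avoids `c`, yet contains the unique `s`–`t` path, which passes `c`
  have hmem := (r₁.reverse.append r₂).support_bypass_subset_support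
    (hT.mem_support_of_dist_add_dist (r₁.reverse.append r₂).bypass_isPath hc)
  rw [Walk.mem_support_append_iff, Walk.support_reverse, List.mem_reverse] at hmem
  exact (hmem.elim h₁ h₂).elim

lemma IsTree.dist_le_of_mem_support (hT : T.IsTree) {u v w c : V} {r : ℕ} {p : T.Walk u v}
    (hp : p.IsPath) (hw : w ∈ p.support) (hu : T.dist c u ≤ r) (hv : T.dist c v ≤ r) :
    T.dist c w ≤ r := by
  rcases hT.dist_add_dist_or (hT.dist_add_dist_of_mem_support hp hw) c with h | h <;> omega

lemma IsTree.eq_of_dist_add_dist (hT : T.IsTree) {u v c c' : V}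
    (hc : T.dist u c + T.dist c v = T.dist u v) (hc' : T.dist u c' + T.dist c' v = T.dist u v)
    (h : T.dist u c = T.dist u c') : c = c' := by
  classical
  obtain ⟨p, hp, -⟩ := hT.connected.exists_path_of_dist u v
  have hmem := hT.mem_support_of_dist_add_dist hp hc
  have hmem' := hT.mem_support_of_dist_add_dist hp hc'
  rw [← p.getVert_length_takeUntil hmem, ← p.getVert_length_takeUntil hmem',
    hT.length_eq_dist (hp.takeUntil hmem), hT.length_eq_dist (hp.takeUntil hmem'), h]

lemma IsTree.even_dist_add_length_add_dist (hT : T.IsTree) (r : V) {a b : V} (p : T.Walk a b) :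
    Even (T.dist r a + p.length + T.dist r b) := by
  induction p with
  | nil => simp
  | @cons a c b h q ih =>
    have := hT.dist_eq_dist_add_one_of_adj r h
    rw [Nat.even_iff] at ih ⊢
    rw [Walk.length_cons]
    omega

lemma IsTree.even_dist_add_dist_add_dist (hT : T.IsTree) (a b c : V) :
    Even (T.dist a b + T.dist b c + T.dist a c) := by
  obtain ⟨p, -, hpl⟩ := hT.connected.exists_path_of_dist b c
  simpa [hpl] using hT.even_dist_add_length_add_dist a p

lemma IsTree.dist_add_dist_eq_of_dist_le (hT : T.IsTree) {u v c : V} {r : ℕ}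
    (huv : T.dist u v + 1 = 2 * r) (hu : T.dist c u ≤ r) (hv : T.dist c v ≤ r) :
    T.dist u c + T.dist c v = T.dist u v := by
  have htri := hT.connected.dist_triangle (u := u) (v := c) (w := v)
  have hpar := Nat.even_iff.mp (hT.even_dist_add_dist_add_dist u c v)
  rw [dist_comm] at hu
  omega

lemma IsTree.exists_dist_le_of_forall_dist_le (hT : T.IsTree) {S : Set V} (hS : S.Nonempty)
    {k : ℕ} (hk : ∀ a ∈ S, ∀ b ∈ S, T.dist a b ≤ 2 * k) : ∃ c, ∀ a ∈ S, T.dist c a ≤ k := by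
  obtain ⟨s, hs, t, ht, hmax⟩ :
      ∃ s ∈ S, ∃ t ∈ S, ∀ a ∈ S, ∀ b ∈ S, T.dist a b ≤ T.dist s t := by
    set D := {d | ∃ a ∈ S, ∃ b ∈ S, T.dist a b = d}
    obtain ⟨a, ha⟩ := hS
    have hD : D.Nonempty := ⟨_, a, ha, a, ha, rfl⟩
    have hbdd : BddAbove D := ⟨2 * k, by rintro _ ⟨a, ha, b, hb, rfl⟩; exact hk a ha b hb⟩
    obtain ⟨s, hs, t, ht, hst⟩ := Nat.sSup_mem hD hbdd
    exact ⟨s, hs, t, ht, fun a ha b hb => hst ▸ le_csSup hbdd ⟨a, ha, b, hb, rfl⟩⟩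
  obtain ⟨p, hp, hpl⟩ := hT.connected.exists_path_of_dist s t
  -- the center is the vertex of the diametral geodesic at distance `k` from `t`
  have hsc : T.dist s (p.getVert (T.dist s t - k)) = T.dist s t - k := by
    rw [← hT.length_eq_dist (hp.take _), Walk.take_length]
    omega
  have hct := hT.dist_add_dist_of_mem_support hp (p.getVert_mem_support (T.dist s t - k))
  generalize p.getVert (T.dist s t - k) = c at hsc hct
  refine ⟨c, fun x hx => ?_⟩
  have hst := hk s hs t ht
  have hxs := hmax x hx s hs
  have hxt := hmax x hx t ht
  rw [dist_comm]
  rcases hT.dist_add_dist_or hct x with h | h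
  · rw [dist_comm (u := c)] at h
    omega
  · omega

end SimpleGraph

lemma exists_dist_eq_setDiam {V : Type*} {T : SimpleGraph V} {S : Set V} (h : setDiam T S ≠ 0) :
    ∃ u ∈ S, ∃ w ∈ S, T.dist u w = setDiam T S := by
  have hne : {d | ∃ u ∈ S, ∃ w ∈ S, T.dist u w = d}.Nonempty := by
    rw [Set.nonempty_iff_ne_empty]
    rintro hempty
    exact h (by rw [setDiam, hempty, csSup_empty, bot_eq_zero])
  have hbdd : BddAbove {d | ∃ u ∈ S, ∃ w ∈ S, T.dist u w = d} := by
    by_contra hunbdd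
    exact h (by rw [setDiam, csSup_of_not_bddAbove hunbdd, csSup_empty, bot_eq_zero])
  exact Nat.sSup_mem hne hbdd

lemma SimpleGraph.IsTree.dist_le_of_mem_span {V : Type*} {T : SimpleGraph V} (hT : T.IsTree)
    {S : Set V} {c w : V} {r : ℕ} (hS : ∀ a ∈ S, T.dist c a ≤ r) (hw : w ∈ span T S) :
    T.dist c w ≤ r := by
  obtain ⟨a, ha, b, hb, p, hp, hwp⟩ := hw
  exact hT.dist_le_of_mem_support hp hwp (hS a ha) (hS b hb)

lemma IsCliqueIntersection.exists_ne_of_ssubset {α : Type*} {G : SimpleGraph α} {X K : Set α}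
    (hX : IsCliqueIntersection G X) (hXK : X ⊂ K) : ∃ K', IsMaxClique G K' ∧ X ⊆ K' ∧ K' ≠ K := by
  obtain ⟨𝒦, h𝒦, h𝒦max, rfl⟩ := hX
  by_contra! h
  have : 𝒦 = {K} := Set.eq_singleton_iff_nonempty_unique_mem.mpr
    ⟨h𝒦, fun K' hK' => h K' (h𝒦max K' hK') (Set.sInter_subset_of_mem hK')⟩
  exact hXK.ne (by rw [this, Set.sInter_singleton])

namespace IsSteinerRoot

variable {α β : Type*} {G : SimpleGraph α} {T : SimpleGraph β} {f : α → β} {k : ℕ}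

lemma dist_le (h : IsSteinerRoot k G T f) {K : Set α} (hK : G.IsClique K) {x y : α}
    (hx : x ∈ K) (hy : y ∈ K) : T.dist (f x) (f y) ≤ k := by
  obtain rfl | hxy := eq_or_ne x y
  · simp
  · exact (h.2.2 x y hxy).mp (hK hx hy hxy)

lemma isClique_of_dist_le (h : IsSteinerRoot (2 * k) G T f) {S : Set α} {c : β}
    (hS : ∀ x ∈ S, T.dist c (f x) ≤ k) : G.IsClique S := by
  intro x hx y hy hxy
  have htri := h.2.1.connected.dist_triangle (u := f x) (v := c) (w := f y)
  have hx' := hS x hx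
  rw [SimpleGraph.dist_comm] at hx'
  exact (h.2.2 x y hxy).mpr (by linarith [hS y hy])

lemma exists_center (h : IsSteinerRoot (2 * k) G T f) {K : Set α} (hK : G.IsClique K)
    (hne : K.Nonempty) : ∃ c, ∀ x ∈ K, T.dist c (f x) ≤ k := by
  obtain ⟨c, hc⟩ := h.2.1.exists_dist_le_of_forall_dist_le (hne.image f) (by
    rintro _ ⟨x, hx, rfl⟩ _ ⟨y, hy, rfl⟩
    exact h.dist_le hK hx hy)
  exact ⟨c, fun x hx => hc _ ⟨x, hx, rfl⟩⟩

lemma eq_of_center (h : IsSteinerRoot (2 * k) G T f) {K₁ K₂ : Set α} {c : β}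
    (hK₁ : IsMaxClique G K₁) (hK₂ : IsMaxClique G K₂) (hc₁ : ∀ x ∈ K₁, T.dist c (f x) ≤ k)
    (hc₂ : ∀ x ∈ K₂, T.dist c (f x) ≤ k) : K₁ = K₂ := by
  have hcl : G.IsClique (K₁ ∪ K₂) := h.isClique_of_dist_le (by
    rintro x (hx | hx)
    exacts [hc₁ x hx, hc₂ x hx])
  exact (hK₁.2 _ hcl Set.subset_union_left).symm.trans (hK₂.2 _ hcl Set.subset_union_right)

lemma exists_center_between (h : IsSteinerRoot (2 * k) G T f) {X K : Set α} {u v : β}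
    (hu : u ∈ span T (f '' X)) (hv : v ∈ span T (f '' X)) (huv : T.dist u v + 1 = 2 * k)
    (hK : IsMaxClique G K) (hXK : X ⊆ K) :
    ∃ c, (∀ x ∈ K, T.dist c (f x) ≤ k) ∧ T.dist u c + T.dist c v = T.dist u v ∧
      T.dist c u ≤ k ∧ T.dist c v ≤ k := by
  obtain ⟨x, hx⟩ : X.Nonempty := by
    obtain ⟨_, ⟨x, hx, rfl⟩, -⟩ := hu
    exact ⟨x, hx⟩
  obtain ⟨c, hc⟩ := h.exists_center hK.1 ⟨x, hXK hx⟩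
  have hspan : ∀ w ∈ span T (f '' X), T.dist c w ≤ k := fun w hw =>
    h.2.1.dist_le_of_mem_span (by rintro _ ⟨y, hy, rfl⟩; exact hc y (hXK hy)) hw
  exact ⟨c, hc, h.2.1.dist_add_dist_eq_of_dist_le huv (hspan u hu) (hspan v hv),
    hspan u hu, hspan v hv⟩

lemma eq_or_eq_or_eq_of_setDiam (h : IsSteinerRoot (2 * k) G T f) {X K₁ K₂ K₃ : Set α}
    (hd : setDiam T (span T (f '' X)) + 1 = 2 * k) (hK₁ : IsMaxClique G K₁)
    (hK₂ : IsMaxClique G K₂) (hK₃ : IsMaxClique G K₃) (hX₁ : X ⊆ K₁) (hX₂ : X ⊆ K₂)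
    (hX₃ : X ⊆ K₃) : K₁ = K₂ ∨ K₁ = K₃ ∨ K₂ = K₃ := by
  obtain ⟨u, hu, v, hv, huv⟩ := exists_dist_eq_setDiam (T := T) (S := span T (f '' X)) (by omega)
  rw [← huv] at hd
  obtain ⟨c₁, hc₁, hb₁, hu₁, hv₁⟩ := h.exists_center_between hu hv hd hK₁ hX₁
  obtain ⟨c₂, hc₂, hb₂, hu₂, hv₂⟩ := h.exists_center_between hu hv hd hK₂ hX₂
  obtain ⟨c₃, hc₃, hb₃, hu₃, hv₃⟩ := h.exists_center_between hu hv hd hK₃ hX₃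
  rw [SimpleGraph.dist_comm] at hu₁ hu₂ hu₃
  have hpos : T.dist u c₁ = T.dist u c₂ ∨ T.dist u c₁ = T.dist u c₃ ∨
      T.dist u c₂ = T.dist u c₃ := by
    omega
  rcases hpos with h₁₂ | h₁₃ | h₂₃
  · rw [← h.2.1.eq_of_dist_add_dist hb₁ hb₂ h₁₂] at hc₂
    exact Or.inl (h.eq_of_center hK₁ hK₂ hc₁ hc₂)
  · rw [← h.2.1.eq_of_dist_add_dist hb₁ hb₃ h₁₃] at hc₃
    exact Or.inr (Or.inl (h.eq_of_center hK₁ hK₃ hc₁ hc₃))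
  · rw [← h.2.1.eq_of_dist_add_dist hb₂ hb₃ h₂₃] at hc₃
    exact Or.inr (Or.inr (h.eq_of_center hK₂ hK₃ hc₂ hc₃))

end IsSteinerRoot

theorem stmt14_general {α β : Type*}
    (G : SimpleGraph α) (T : SimpleGraph β) (f : α → β)
    (hroot : IsSteinerRoot 4 G T f) (K X : Set α)
    (hK : IsMaxClique G K) (hX : IsCliqueIntersection G X) (hsub : X ⊂ K)
    (hd : setDiam T (span T (f '' X)) = 3) :
    ∃ K1 K2 : Set α, K1 ≠ K2 ∧ IsMaxClique G K1 ∧ IsMaxClique G K2 ∧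
      X ⊆ K1 ∧ X ⊆ K2 ∧
      ∀ K', IsMaxClique G K' → X ⊆ K' → K' = K1 ∨ K' = K2 := by
  obtain ⟨K₂, hK₂, hXK₂, hne⟩ := hX.exists_ne_of_ssubset hsub
  refine ⟨K, K₂, hne.symm, hK, hK₂, hsub.subset, hXK₂, fun K' hK' hXK' => ?_⟩
  rcases IsSteinerRoot.eq_or_eq_or_eq_of_setDiam (k := 2) hroot (by rw [hd]) hK hK₂ hK'
    hsub.subset hXK₂ hXK' with h | h | h
  · exact absurd h.symm hne
  · exact Or.inl h.symm
  · exact Or.inr h.symm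

/-- If `T` is a `4`-Steiner root of `G` and `X` is a clique-intersection
strictly contained in some maximal clique with `diam(T⟨X⟩) = 3`, then `X`
is contained in exactly two maximal cliques of `G`. -/
theorem stmt14 {α β : Type*} [Fintype α] [Fintype β]
    (G : SimpleGraph α) (hG : G.Connected) (T : SimpleGraph β) (f : α → β)
    (hroot : IsSteinerRoot 4 G T f) (K X : Set α)
    (hK : IsMaxClique G K) (hX : IsCliqueIntersection G X) (hsub : X ⊂ K)
    (hd : setDiam T (span T (f '' X)) = 3) :
    ∃ K1 K2 : Set α, K1 ≠ K2 ∧ IsMaxClique G K1 ∧ IsMaxClique G K2 ∧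
      X ⊆ K1 ∧ X ⊆ K2 ∧
      ∀ K', IsMaxClique G K' → X ⊆ K' → K' = K1 ∨ K' = K2 :=
  stmt14_general G T f hroot K X hK hX hsub hd
end

section
/- Every chordal graph G admits a clique-tree T_G rooted at an arbitrary maximal clique such that for every non-root maximal clique K_i with parent K_{p(i)} and separator S_i = K_i ∩ K_{p(i)}, and for every child K_j of K_{p(i)}, no minimal separator of the subgraph G_j (induced by the union of maximal cliques in the subtree rooted at K_j) is contained in S_i. -/
/-- `G` is chordal: every cycle of length at least 4 has a chord. -/
def Chordal {α : Type*} (G : SimpleGraph α) : Prop :=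
  ∀ (v : α) (p : G.Walk v v), p.IsCycle → 4 ≤ p.length →
    ∃ x ∈ p.support, ∃ y ∈ p.support, G.Adj x y ∧ s(x, y) ∉ p.edges

/-- `S` separates `u` and `v` inside the induced subgraph of `G` on `W`:
every walk from `u` to `v` staying in `W` meets `S`. -/
def IsUVSepWithin {α : Type*} (G : SimpleGraph α) (W S : Set α) (u v : α) : Prop :=
  u ∈ W ∧ v ∈ W ∧ u ∉ S ∧ v ∉ S ∧ ¬ G.Adj u v ∧
    ∀ p : G.Walk u v, (∀ w ∈ p.support, w ∈ W) → ∃ w ∈ p.support, w ∈ S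

/-- `S` is a minimal separator of the subgraph of `G` induced by `W`. -/
def IsMinSepWithin {α : Type*} (G : SimpleGraph α) (W S : Set α) : Prop :=
  S ⊆ W ∧ ∃ u v : α, u ≠ v ∧ IsUVSepWithin G W S u v ∧
    ∀ S' ⊂ S, ¬ IsUVSepWithin G W S' u v

abbrev MaxCliques {α : Type*} (G : SimpleGraph α) := {K : Set α // IsMaxClique G K}

/-!
Among the clique trees rooted at the given clique, take one of minimal total depth. Let `K_i` and
`K_j` be siblings below `K_p` and suppose a separator `S` of `G_j` lies in `K_i ∩ K_p`. As `K_j`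
is not contained in `K_p`, some vertex of `K_j` avoids `S`, so one of the two components of
`G_j - S` that `S` separates misses `K_j`. The topmost clique `K_k` meeting that component lies at
least two levels below `K_p`, and its separator `K_k ∩ K_{p(k)}` lies in `S ⊆ K_p`. Re-attaching
the subtree of `K_k` directly below `K_p` gives again a clique tree, of smaller total depth.

Clique trees exist by the usual induction deleting a simplicial vertex, which exists by Dirac's
lemma; the vertex is chosen so that its closed neighbourhood is not the root.
-/

open SimpleGraph

section RootedTree

variable {β : Type*}

def IsAncestor (par : β → β) (a b : β) : Prop := ∃ n : ℕ, par^[n] b = a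

namespace IsAncestor

variable {par : β → β} {a b c : β}

lemma refl (b : β) : IsAncestor par b b := ⟨0, rfl⟩

lemma parent (b : β) : IsAncestor par (par b) b := ⟨1, rfl⟩

lemma trans (hab : IsAncestor par a b) (hbc : IsAncestor par b c) : IsAncestor par a c := by
  obtain ⟨n, rfl⟩ := hab
  obtain ⟨m, rfl⟩ := hbc
  exact ⟨n + m, Function.iterate_add_apply par n m c⟩

lemma of_parent (h : IsAncestor par a (par b)) : IsAncestor par a b := h.trans (parent b)

lemma total (hac : IsAncestor par a c) (hbc : IsAncestor par b c) :
    IsAncestor par a b ∨ IsAncestor par b a := by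
  obtain ⟨n, rfl⟩ := hac
  obtain ⟨m, rfl⟩ := hbc
  rcases le_total n m with h | h
  · exact Or.inr ⟨m - n, by rw [← Function.iterate_add_apply, Nat.sub_add_cancel h]⟩
  · exact Or.inl ⟨n - m, by rw [← Function.iterate_add_apply, Nat.sub_add_cancel h]⟩

lemma parent_of_ne (h : IsAncestor par a b) (hne : a ≠ b) : IsAncestor par a (par b) := by
  obtain ⟨_ | n, rfl⟩ := h
  · exact absurd rfl hne
  · exact ⟨n, (Function.iterate_succ_apply par n b).symm⟩

lemma conj_iff {g : β → β} (hg : Function.Involutive g) :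
    IsAncestor (fun x => g (par (g x))) a b ↔ IsAncestor par (g a) (g b) :=
  exists_congr fun n => by
    rw [← hg.injective.eq_iff, ← (show Function.Semiconj g (fun x => g (par (g x))) par from
      fun x => hg _).iterate_right n]

end IsAncestor

structure IsRootedTree (par : β → β) (dep : β → ℕ) (root : β) : Prop where
  parent_root : par root = root
  dep_root : dep root = 0
  dep_eq : ∀ b, b ≠ root → dep b = dep (par b) + 1

namespace IsRootedTree

variable {par : β → β} {dep : β → ℕ} {root : β} (T : IsRootedTree par dep root)
include T

lemma dep_parent_lt {b : β} (hb : b ≠ root) : dep (par b) < dep b := by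
  rw [T.dep_eq b hb]; omega

lemma dep_parent_le (b : β) : dep (par b) ≤ dep b := by
  by_cases hb : b = root
  · rw [hb, T.parent_root]
  · exact (T.dep_parent_lt hb).le

lemma dep_le_of_isAncestor {a b : β} (h : IsAncestor par a b) : dep a ≤ dep b := by
  obtain ⟨n, rfl⟩ := h
  induction n with
  | zero => exact le_rfl
  | succ n ih => exact (Function.iterate_succ_apply' par n b ▸ T.dep_parent_le _).trans ih

lemma dep_lt_of_isAncestor {a b : β} (h : IsAncestor par a b) (hne : a ≠ b) : dep a < dep b := by
  have hb : b ≠ root := by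
    rintro rfl
    obtain ⟨n, rfl⟩ := h
    exact hne (Function.iterate_fixed T.parent_root n)
  exact (T.dep_le_of_isAncestor (h.parent_of_ne hne)).trans_lt (T.dep_parent_lt hb)

lemma eq_of_isAncestor_of_dep_le {a b : β} (h : IsAncestor par a b) (hd : dep b ≤ dep a) :
    a = b := by
  by_contra hne
  exact (T.dep_lt_of_isAncestor h hne).not_ge hd

lemma isAncestor_antisymm {a b : β} (hab : IsAncestor par a b) (hba : IsAncestor par b a) :
    a = b :=
  T.eq_of_isAncestor_of_dep_le hab (T.dep_le_of_isAncestor hba)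

lemma eq_root_of_isAncestor {a : β} (h : IsAncestor par a root) : a = root :=
  T.eq_of_isAncestor_of_dep_le h (T.dep_root ▸ Nat.zero_le _)

lemma root_isAncestor (b : β) : IsAncestor par root b := by
  induction hn : dep b using Nat.strong_induction_on generalizing b with
  | _ n ih =>
    by_cases hb : b = root
    · exact hb ▸ IsAncestor.refl b
    · exact (ih _ (hn ▸ T.dep_parent_lt hb) (par b) rfl).of_parent

end IsRootedTree

def parentGraph (par : β → β) : SimpleGraph β := SimpleGraph.fromRel fun a b => par a = b

variable {par : β → β} {dep : β → ℕ} {root : β}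

lemma IsRootedTree.adj_parent (T : IsRootedTree par dep root) {b : β} (hb : b ≠ root) :
    (parentGraph par).Adj b (par b) :=
  ⟨fun h => (T.dep_parent_lt hb).ne (congrArg dep h).symm, Or.inl rfl⟩

lemma IsRootedTree.eq_parent_of_adj (T : IsRootedTree par dep root) {a b : β}
    (h : (parentGraph par).Adj a b) (hd : dep b ≤ dep a) : b = par a := by
  obtain ⟨hne, h | h⟩ := h
  · exact h.symm
  · have hb : b ≠ root := fun hb => hne (by rw [← h, hb, T.parent_root])
    exact absurd (h ▸ T.dep_parent_lt hb) hd.not_gt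

open Classical in
noncomputable def walkToRoot (T : IsRootedTree par dep root) (b : β) :
    (parentGraph par).Walk b root :=
  if hb : b = root then hb ▸ Walk.nil
  else Walk.cons (T.adj_parent hb) (walkToRoot T (par b))
termination_by dep b
decreasing_by exact T.dep_parent_lt hb

namespace IsRootedTree

variable (T : IsRootedTree par dep root)
include T

lemma walkToRoot_root : walkToRoot T root = Walk.nil := by
  rw [walkToRoot]; simp

lemma walkToRoot_of_ne {b : β} (hb : b ≠ root) :
    walkToRoot T b = Walk.cons (T.adj_parent hb) (walkToRoot T (par b)) := by
  rw [walkToRoot]; simp [hb]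

lemma mem_support_walkToRoot_iff {a b : β} :
    a ∈ (walkToRoot T b).support ↔ IsAncestor par a b := by
  induction hn : dep b using Nat.strong_induction_on generalizing b with
  | _ n ih =>
    by_cases hb : b = root
    · subst hb
      rw [walkToRoot_root, Walk.support_nil, List.mem_singleton]
      exact ⟨fun h => h ▸ IsAncestor.refl _, T.eq_root_of_isAncestor⟩
    · rw [walkToRoot_of_ne T hb, Walk.support_cons, List.mem_cons,
        ih _ (hn ▸ T.dep_parent_lt hb) rfl]
      refine ⟨?_, fun h => ?_⟩
      · rintro (rfl | h)
        exacts [IsAncestor.refl _, h.of_parent]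
      · by_cases hab : a = b
        exacts [Or.inl hab, Or.inr (h.parent_of_ne hab)]

lemma isPath_walkToRoot (b : β) : (walkToRoot T b).IsPath := by
  induction hn : dep b using Nat.strong_induction_on generalizing b with
  | _ n ih =>
    by_cases hb : b = root
    · subst hb; rw [walkToRoot_root]; exact Walk.IsPath.nil
    · rw [walkToRoot_of_ne T hb]
      refine (ih _ (hn ▸ T.dep_parent_lt hb) _ rfl).cons fun hmem => ?_
      exact (T.dep_parent_lt hb).not_ge
        (T.dep_le_of_isAncestor ((T.mem_support_walkToRoot_iff).1 hmem))

lemma connected_parentGraph : (parentGraph par).Connected :=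
  haveI : Nonempty β := ⟨root⟩
  ⟨fun a b => (walkToRoot T a).reachable.trans (walkToRoot T b).reachable.symm⟩

/-- On a cycle, a vertex of maximal depth would have two distinct neighbours on the cycle,
both of which must be its parent. -/
lemma isAcyclic_parentGraph : (parentGraph par).IsAcyclic := by
  intro v c hc
  classical
  obtain ⟨u, hu, hmax⟩ := c.support.toFinset.exists_max_image dep ⟨v, by simp⟩
  rw [List.mem_toFinset] at hu
  set c' := c.rotate u hu
  have hc' : c'.IsCycle := hc.rotate hu
  have hparent : ∀ x ∈ c'.support, (parentGraph par).Adj u x → x = par u := fun x hx hux =>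
    T.eq_parent_of_adj hux (hmax x (List.mem_toFinset.2 ((c.mem_support_rotate_iff u hu).1 hx)))
  have hnil : ¬ c'.Nil := hc'.not_nil
  exact hc'.snd_ne_penultimate <|
    (hparent _ (c'.getVert_mem_support 1) (c'.adj_snd hnil)).trans
      (hparent _ (c'.getVert_mem_support _) (c'.adj_penultimate hnil).symm).symm

lemma isTree_parentGraph : (parentGraph par).IsTree :=
  ⟨T.connected_parentGraph, T.isAcyclic_parentGraph⟩

lemma eq_walkToRoot_of_isPath {b : β} (p : (parentGraph par).Walk b root) (hp : p.IsPath) :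
    p = walkToRoot T b :=
  have := T.isAcyclic_parentGraph.subsingleton_path b root
  congrArg Subtype.val (Subsingleton.elim ⟨p, hp⟩ ⟨_, T.isPath_walkToRoot b⟩)

lemma isAncestor_iff_forall_isPath {a b : β} :
    (∀ p : (parentGraph par).Walk b root, p.IsPath → a ∈ p.support) ↔ IsAncestor par a b :=
  ⟨fun h => T.mem_support_walkToRoot_iff.1 (h _ (T.isPath_walkToRoot b)),
    fun h p hp => T.eq_walkToRoot_of_isPath p hp ▸ T.mem_support_walkToRoot_iff.2 h⟩

end IsRootedTree

end RootedTree

section JunctionTree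

variable {β γ : Type*} {par : β → β} {dep : β → ℕ} {root : β} {Kf : β → Set γ}

/-- The clique-tree condition that the bags containing a given element form a subtree, stated
along the parent map. -/
def IsJunctionTree (par : β → β) (root : β) (Kf : β → Set γ) : Prop :=
  ∀ i, i ≠ root → ∀ x ∈ Kf i,
    (∃ k, ¬ IsAncestor par i k ∧ x ∈ Kf k) → x ∈ Kf (par i)

namespace IsJunctionTree

variable (T : IsRootedTree par dep root) (hjt : IsJunctionTree par root Kf)
include T hjt

lemma mem_of_not_isAncestor {x : γ} {c y : β} (hy : x ∈ Kf y) (hcy : ¬ IsAncestor par c y)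
    {b : β} (hb : x ∈ Kf b) (hcb : IsAncestor par c b) : x ∈ Kf c := by
  induction hn : dep b using Nat.strong_induction_on generalizing b with
  | _ n ih =>
    by_cases hbc : b = c
    · exact hbc ▸ hb
    · have hbroot : b ≠ root := by
        rintro rfl
        exact hcy (hcb.trans (T.root_isAncestor y))
      exact ih _ (hn ▸ T.dep_parent_lt hbroot)
        (hjt b hbroot x hb ⟨y, fun h => hcy (hcb.trans h), hy⟩)
        (hcb.parent_of_ne (Ne.symm hbc)) rfl

lemma mem_of_isAncestor_of_isAncestor {x : γ} {a b c : β} (ha : x ∈ Kf a) (hb : x ∈ Kf b)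
    (hac : IsAncestor par a c) (hcb : IsAncestor par c b) : x ∈ Kf c := by
  by_cases hca : c = a
  · exact hca ▸ ha
  · exact mem_of_not_isAncestor T hjt ha (fun h => hca (T.isAncestor_antisymm h hac)) hb hcb

lemma mem_of_mem_biUnion {x : γ} {j k : β} (hxk : x ∈ Kf k) (hjk : ¬ IsAncestor par j k)
    (hx : x ∈ ⋃ l ∈ {l | IsAncestor par j l}, Kf l) : x ∈ Kf j :=
  let ⟨_, hjl, hxl⟩ := Set.mem_iUnion₂.1 hx
  mem_of_not_isAncestor T hjt hxk hjk hxl hjl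

lemma connected_induce {x : γ} (hx : ∃ i, x ∈ Kf i) :
    ((parentGraph par).induce {i | x ∈ Kf i}).Connected := by
  obtain ⟨t, htx, htmin⟩ := WellFounded.has_min (measure dep).wf {i | x ∈ Kf i} hx
  have htop : ∀ i (hi : x ∈ Kf i),
      ((parentGraph par).induce {i | x ∈ Kf i}).Reachable ⟨i, hi⟩ ⟨t, htx⟩ := by
    intro i hi
    induction hn : dep i using Nat.strong_induction_on generalizing i with
    | _ n ih =>
      by_cases hit : i = t
      · subst hit; rfl
      · have hti : ¬ IsAncestor par i t := fun h =>
          hit (T.eq_of_isAncestor_of_dep_le h (not_lt.1 (htmin i hi)))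
        have hiroot : i ≠ root := by
          rintro rfl
          exact hti (T.root_isAncestor t)
        have hpar : x ∈ Kf (par i) := hjt i hiroot x hi ⟨t, hti, htx⟩
        have hadj : ((parentGraph par).induce {i | x ∈ Kf i}).Adj ⟨i, hi⟩ ⟨par i, hpar⟩ :=
          T.adj_parent hiroot
        exact hadj.reachable.trans (ih _ (hn ▸ T.dep_parent_lt hiroot) _ hpar rfl)
  have : Nonempty {i | x ∈ Kf i} := ⟨⟨t, htx⟩⟩
  exact ⟨fun a b => (htop a a.2).trans (htop b b.2).symm⟩

end IsJunctionTree

end JunctionTree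

section Rehang

variable {β γ : Type*} [DecidableEq β] {par : β → β} {dep : β → ℕ} {root k q : β}

omit [DecidableEq β] in
lemma iterate_eq_iterate_of_forall_lt {f g : β → β} {b : β} {n : ℕ}
    (h : ∀ m < n, g (f^[m] b) = f (f^[m] b)) : g^[n] b = f^[n] b := by
  induction n with
  | zero => rfl
  | succ n ih =>
    rw [Function.iterate_succ_apply', Function.iterate_succ_apply', ih fun m hm => h m (by omega),
      h n (by omega)]

lemma isAncestor_update_iff_of_not_isAncestor {a b : β} (hb : ¬ IsAncestor par k b) :
    IsAncestor (Function.update par k q) a b ↔ IsAncestor par a b := by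
  have hiter (n : ℕ) : (Function.update par k q)^[n] b = par^[n] b :=
    iterate_eq_iterate_of_forall_lt fun m _ =>
      Function.update_of_ne (fun h => hb ⟨m, h⟩) _ _
  exact ⟨fun ⟨n, hn⟩ => ⟨n, hiter n ▸ hn⟩, fun ⟨n, hn⟩ => ⟨n, hiter n ▸ hn⟩⟩

lemma IsRootedTree.isAncestor_update (T : IsRootedTree par dep root) (hk : k ≠ root) {a b : β}
    (hka : IsAncestor par k a) (hab : IsAncestor par a b) :
    IsAncestor (Function.update par k q) a b := by
  obtain ⟨n, rfl⟩ := hab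
  refine ⟨n, iterate_eq_iterate_of_forall_lt fun m hm => Function.update_of_ne ?_ _ _⟩
  intro hmk
  have hup : IsAncestor par (par^[n] b) (par k) :=
    ⟨n - m - 1, by
      rw [← Function.iterate_succ_apply, ← hmk, ← Function.iterate_add_apply]
      congr 1
      omega⟩
  exact (T.dep_le_of_isAncestor hup).not_gt
    ((T.dep_parent_lt hk).trans_le (T.dep_le_of_isAncestor hka))

lemma IsRootedTree.rehang (T : IsRootedTree par dep root) (hk : k ≠ root)
    (hq : ¬ IsAncestor par k q) (hdq : dep q + 1 < dep k) :
    ∃ dep' : β → ℕ, IsRootedTree (Function.update par k q) dep' root ∧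
      dep' k < dep k ∧ ∀ b, dep' b ≤ dep b := by
  classical
  set dep' : β → ℕ := fun b =>
    if IsAncestor par k b then dep b - (dep k - (dep q + 1)) else dep b
  have hdepk : dep' k = dep q + 1 := by simp only [dep', if_pos (IsAncestor.refl k)]; omega
  have hdepq : dep' q = dep q := if_neg hq
  refine ⟨dep', ⟨?_, ?_, fun b hb => ?_⟩, by omega,
    fun b => by simp only [dep']; split_ifs <;> omega⟩
  · rw [Function.update_of_ne (Ne.symm hk), T.parent_root]
  · exact (if_neg fun h => hk (T.eq_root_of_isAncestor h)).trans T.dep_root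
  by_cases hbk : b = k
  · rw [hbk, Function.update_self, hdepk, hdepq]
  rw [Function.update_of_ne hbk]
  have := T.dep_eq b hb
  by_cases hkb : IsAncestor par k b
  · have hkp := hkb.parent_of_ne (Ne.symm hbk)
    have := T.dep_le_of_isAncestor hkp
    simp only [dep', hkb, hkp, if_true]
    omega
  · have hkp : ¬ IsAncestor par k (par b) := fun h => hkb h.of_parent
    simp only [dep', hkb, hkp, if_false]
    exact this

variable {Kf : β → Set γ}

lemma IsJunctionTree.rehang (T : IsRootedTree par dep root) (hjt : IsJunctionTree par root Kf)
    (hk : k ≠ root) (hq : ¬ IsAncestor par k q) (hqk : IsAncestor par q k)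
    (hS : Kf k ∩ Kf (par k) ⊆ Kf q) : IsJunctionTree (Function.update par k q) root Kf := by
  have hkq : IsAncestor (Function.update par k q) q k := ⟨1, by simp⟩
  intro i hi x hxi ⟨b, hib, hxb⟩
  by_cases hik : i = k
  · subst hik
    rw [Function.update_self]
    refine hS ⟨hxi, hjt i hi x hxi ⟨b, fun h => hib ?_, hxb⟩⟩
    exact T.isAncestor_update hk (IsAncestor.refl i) h
  rw [Function.update_of_ne hik]
  by_cases hib' : IsAncestor par i b
  swap
  · exact hjt i hi x hxi ⟨b, hib', hxb⟩
  have hkb : IsAncestor par k b := by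
    by_contra hkb
    exact hib ((isAncestor_update_iff_of_not_isAncestor hkb).2 hib')
  have hki : ¬ IsAncestor par k i := fun h => hib (T.isAncestor_update hk h hib')
  have hiq : ¬ IsAncestor par i q := fun h => hib <|
    ((isAncestor_update_iff_of_not_isAncestor hq).2 h).trans
      (hkq.trans (T.isAncestor_update hk (IsAncestor.refl k) hkb))
  have hik' : IsAncestor par i k := (hib'.total hkb).resolve_right hki
  have hqi : IsAncestor par q i := (hik'.total hqk).resolve_left hiq
  have hxq : x ∈ Kf q := hS
    ⟨IsJunctionTree.mem_of_isAncestor_of_isAncestor T hjt hxi hxb hik' hkb,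
      IsJunctionTree.mem_of_isAncestor_of_isAncestor T hjt hxi hxb
        (hik'.parent_of_ne hik) (IsAncestor.parent k |>.trans hkb)⟩
  exact IsJunctionTree.mem_of_isAncestor_of_isAncestor T hjt hxq hxi
    (hqi.parent_of_ne fun h => hiq (h ▸ IsAncestor.refl q)) (IsAncestor.parent i)

end Rehang

section CliqueTreeOn

variable {γ : Type*}

/-- A rooted clique tree whose nodes are the sets satisfying `P`, each node being its own bag. -/
structure IsCliqueTreeOn (P : Set γ → Prop) (par : Set γ → Set γ) (dep : Set γ → ℕ)
    (root : Set γ) : Prop where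
  root_mem : P root
  parent_root : par root = root
  dep_root : dep root = 0
  parent_mem : ∀ K, P K → K ≠ root → P (par K)
  dep_eq : ∀ K, P K → K ≠ root → dep K = dep (par K) + 1
  mem_parent : ∀ K, P K → K ≠ root → ∀ x ∈ K,
    (∃ K', P K' ∧ x ∈ K' ∧ ¬ IsAncestor par K K') → x ∈ par K

namespace IsCliqueTreeOn

variable {P : Set γ → Prop} {par : Set γ → Set γ} {dep : Set γ → ℕ} {root : Set γ}

lemma of_subsingleton (hroot : P root) (hP : ∀ K, P K → K = root) :
    IsCliqueTreeOn P id (fun _ => 0) root :=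
  ⟨hroot, rfl, rfl, fun K hK hne => absurd (hP K hK) hne, fun K hK hne => absurd (hP K hK) hne,
    fun K hK hne => absurd (hP K hK) hne⟩

variable (T : IsCliqueTreeOn P par dep root) [DecidableEq (Set γ)]
include T

omit [DecidableEq (Set γ)] in
lemma parent_mem' {K : Set γ} (hK : P K) : P (par K) := by
  by_cases hKr : K = root
  · rw [hKr, T.parent_root]; exact T.root_mem
  · exact T.parent_mem K hK hKr

omit [DecidableEq (Set γ)] in
lemma iterate_mem {K : Set γ} (hK : P K) (n : ℕ) : P (par^[n] K) := by
  induction n with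
  | zero => exact hK
  | succ n ih => rw [Function.iterate_succ_apply']; exact T.parent_mem' ih

lemma isAncestor_update_iff {L M a b : Set γ} (hL : ¬ P L) (hb : P b) :
    IsAncestor (Function.update par L M) a b ↔ IsAncestor par a b := by
  have hiter (n : ℕ) : (Function.update par L M)^[n] b = par^[n] b :=
    iterate_eq_iterate_of_forall_lt fun m _ =>
      Function.update_of_ne (fun h : par^[m] b = L => hL (h ▸ T.iterate_mem hb m)) _ _
  exact ⟨fun ⟨n, hn⟩ => ⟨n, hiter n ▸ hn⟩, fun ⟨n, hn⟩ => ⟨n, hiter n ▸ hn⟩⟩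

lemma attach {L M : Set γ} (hL : ¬ P L) (hM : P M)
    (hLM : ∀ K, P K → L ∩ K ⊆ M) :
    IsCliqueTreeOn (fun K => K = L ∨ P K) (Function.update par L M)
      (Function.update dep L (dep M + 1)) root := by
  have hne : ∀ {K}, P K → K ≠ L := fun hK h => hL (h ▸ hK)
  have hrootL := hne T.root_mem
  refine ⟨Or.inr T.root_mem, ?_, ?_, ?_, ?_, ?_⟩
  · rw [Function.update_of_ne hrootL, T.parent_root]
  · rw [Function.update_of_ne hrootL, T.dep_root]
  · rintro K (rfl | hK) hKr
    · rw [Function.update_self]; exact Or.inr hM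
    · rw [Function.update_of_ne (hne hK)]; exact Or.inr (T.parent_mem K hK hKr)
  · rintro K (rfl | hK) hKr
    · rw [Function.update_self, Function.update_self, Function.update_of_ne (hne hM)]
    · rw [Function.update_of_ne (hne hK), Function.update_of_ne (hne hK),
        Function.update_of_ne (hne (T.parent_mem K hK hKr)), T.dep_eq K hK hKr]
  · rintro K (rfl | hK) hKr x hxK ⟨K', hK', hxK', hnanc⟩
    · rw [Function.update_self]
      rcases hK' with rfl | hK'
      · exact absurd (IsAncestor.refl _) hnanc
      · exact hLM K' hK' ⟨hxK, hxK'⟩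
    · rw [Function.update_of_ne (hne hK)]
      rcases hK' with hK'L | hK'
      · rw [hK'L] at hxK' hnanc
        refine T.mem_parent K hK hKr x hxK ⟨M, hM, hLM K hK ⟨hxK', hxK⟩, fun h => hnanc ?_⟩
        have hML : IsAncestor (Function.update par L M) M L := ⟨1, by simp⟩
        exact ((T.isAncestor_update_iff hL hM).2 h).trans hML
      · exact T.mem_parent K hK hKr x hxK
          ⟨K', hK', hxK', fun h => hnanc ((T.isAncestor_update_iff hL hK').2 h)⟩

lemma replace {N L : Set γ} (hL : ¬ P L) (hNL : N ⊆ L)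
    (hLK : ∀ K, P K → K ≠ N → L ∩ K ⊆ N) :
    IsCliqueTreeOn (fun K => P (Equiv.swap N L K))
      (fun K => Equiv.swap N L (par (Equiv.swap N L K))) (fun K => dep (Equiv.swap N L K))
      (Equiv.swap N L root) := by
  set g := Equiv.swap N L
  have hgg : Function.Involutive g := Equiv.swap_apply_self N L
  have hgN : ∀ K, P (g K) → K ≠ N := fun K hK h =>
    hL (by rwa [h, Equiv.swap_apply_left] at hK)
  have hfix : ∀ K, P (g K) → K ≠ L → g K = K := fun K hK hKL =>
    Equiv.swap_apply_of_ne_of_ne (hgN K hK) hKL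
  have hsub : ∀ {x} {K}, P K → x ∈ K → x ∈ g K := fun {x K} hK hx => by
    by_cases hKN : K = N
    · rw [hKN, Equiv.swap_apply_left]; exact hNL (hKN ▸ hx)
    · rwa [Equiv.swap_apply_of_ne_of_ne hKN fun h : K = L => hL (h ▸ hK)]
  have hnew : ∀ {x} {K}, P (g K) → K ≠ L → x ∈ L → x ∈ K → x ∈ N :=
    fun {x K} hK hKL hxL hxK => hLK K (hfix K hK hKL ▸ hK) (hgN K hK) ⟨hxL, hxK⟩
  have hmem : ∀ {x} {K K'}, P (g K) → P (g K') → K ≠ K' → x ∈ K → x ∈ K' →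
      x ∈ g K := fun {x K K'} hK hK' hKK' hxK hxK' => by
    by_cases hKL : K = L
    · have hK'L : K' ≠ L := fun h => hKK' (hKL.trans h.symm)
      rw [hKL, Equiv.swap_apply_right]
      exact hnew hK' hK'L (hKL ▸ hxK) hxK'
    · rwa [hfix K hK hKL]
  refine ⟨by rw [hgg root]; exact T.root_mem, by simp only [hgg root, T.parent_root],
    by simp only [hgg root, T.dep_root], fun K hK hKr => ?_, fun K hK hKr => ?_,
    fun K hK hKr x hxK ⟨K', hK', hxK', hnanc⟩ => ?_⟩
  all_goals have hKr' : g K ≠ root := fun h => hKr (by rw [← h, hgg K])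
  · rw [hgg]; exact T.parent_mem _ hK hKr'
  · rw [hgg]; exact T.dep_eq _ hK hKr'
  have hKK' : K ≠ K' := fun h => hnanc (h ▸ IsAncestor.refl K)
  rw [IsAncestor.conj_iff hgg] at hnanc
  exact hsub (T.parent_mem _ hK hKr') (T.mem_parent _ hK hKr' x (hmem hK hK' hKK' hxK hxK')
    ⟨_, hK', hmem hK' hK hKK'.symm hxK' hxK, hnanc⟩)

omit [DecidableEq (Set γ)] in
lemma exists_isRootedTree_isJunctionTree :
    ∃ (par' : {K // P K} → {K // P K}) (dep' : {K // P K} → ℕ),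
      IsRootedTree par' dep' ⟨root, T.root_mem⟩ ∧
        IsJunctionTree par' ⟨root, T.root_mem⟩ Subtype.val := by
  set par' : {K // P K} → {K // P K} := fun K => ⟨par K.1, T.parent_mem' K.2⟩
  have hanc : ∀ a b, IsAncestor par' a b ↔ IsAncestor par a.1 b.1 := fun a b =>
    exists_congr fun n => by
      rw [← Subtype.val_injective.eq_iff, (show Function.Semiconj Subtype.val par' par from
        fun _ => rfl).iterate_right n]
  have hne : ∀ {K : {K // P K}}, K ≠ ⟨root, T.root_mem⟩ → K.1 ≠ root := fun hK h =>
    hK (Subtype.ext h)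
  refine ⟨par', fun K => dep K.1, ⟨Subtype.ext T.parent_root, T.dep_root,
    fun K hK => T.dep_eq K.1 K.2 (hne hK)⟩, fun i hi x hx ⟨k, hnk, hxk⟩ => ?_⟩
  exact T.mem_parent i.1 i.2 (hne hi) x hx ⟨k.1, k.2, hxk, by rwa [← hanc]⟩

end IsCliqueTreeOn

end CliqueTreeOn

namespace SimpleGraph

variable {α : Type*} {G : SimpleGraph α}

def reachWithin (G : SimpleGraph α) (R : Set α) (u : α) : Set α :=
  {x | ∃ p : G.Walk u x, ∀ z ∈ p.support, z ∈ R}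

section ReachWithin

variable {R : Set α} {u x y : α}

lemma mem_reachWithin_self (hu : u ∈ R) : u ∈ G.reachWithin R u :=
  ⟨Walk.nil, by simpa using hu⟩

lemma reachWithin_subset : G.reachWithin R u ⊆ R := fun _ ⟨p, hp⟩ => hp _ p.end_mem_support

lemma mem_reachWithin_of_adj (hx : x ∈ G.reachWithin R u) (hxy : G.Adj x y) (hy : y ∈ R) :
    y ∈ G.reachWithin R u := by
  obtain ⟨p, hp⟩ := hx
  refine ⟨p.concat hxy, fun z hz => ?_⟩
  rw [Walk.support_concat, List.mem_append, List.mem_singleton] at hz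
  exact hz.elim (hp z) (· ▸ hy)

lemma mem_reachWithin_trans (hx : x ∈ G.reachWithin R u) (hy : y ∈ G.reachWithin R x) :
    y ∈ G.reachWithin R u := by
  obtain ⟨p, hp⟩ := hx
  obtain ⟨q, hq⟩ := hy
  refine ⟨p.append q, fun z hz => ?_⟩
  rw [Walk.mem_support_append_iff] at hz
  exact hz.elim (hp z) (hq z)

lemma mem_reachWithin_comm (hx : x ∈ G.reachWithin R u) : u ∈ G.reachWithin R x := by
  obtain ⟨p, hp⟩ := hx
  exact ⟨p.reverse, fun z hz => hp z (List.mem_reverse.1 (p.support_reverse ▸ hz))⟩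

lemma reachWithin_eq (hx : x ∈ G.reachWithin R u) : G.reachWithin R x = G.reachWithin R u :=
  Set.ext fun _ => ⟨mem_reachWithin_trans hx, mem_reachWithin_trans (mem_reachWithin_comm hx)⟩

lemma Walk.support_subset_reachWithin (p : G.Walk u x) (hp : ∀ z ∈ p.support, z ∈ R) :
    ∀ z ∈ p.support, z ∈ G.reachWithin R u := by
  classical
  intro z hz
  exact ⟨p.takeUntil z hz, fun w hw => hp w (p.support_takeUntil_subset_support hz hw)⟩

lemma Walk.exists_adj_notMem_reachWithin (p : G.Walk x y) (hx : x ∈ G.reachWithin R u)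
    (hy : y ∉ G.reachWithin R u) :
    ∃ z ∈ p.support, z ∉ G.reachWithin R u ∧ ∃ w ∈ G.reachWithin R u, G.Adj w z := by
  induction p with
  | nil => exact absurd hx hy
  | @cons a b c hab p ih =>
    by_cases hb : b ∈ G.reachWithin R u
    · obtain ⟨z, hz, hzu, hw⟩ := ih hb hy
      exact ⟨z, List.mem_cons_of_mem _ hz, hzu, hw⟩
    · exact ⟨b, by simp, hb, a, hx, hab⟩

end ReachWithin

section ChordlessPath

lemma Walk.one_lt_length_of_adj {u w : α} (r : G.Walk u w) (huw : G.Adj u w)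
    (he : s(u, w) ∉ r.edges) : 1 < r.length := by
  match r with
  | .nil => exact absurd rfl huw.ne
  | .cons _ .nil => simp at he
  | .cons _ (.cons _ _) => simp

lemma Walk.one_lt_length_of_not_adj {u w : α} (p : G.Walk u w) (hne : u ≠ w)
    (h : ¬ G.Adj u w) : 1 < p.length := by
  match p with
  | .nil => exact absurd rfl hne
  | .cons hadj .nil => exact absurd hadj h
  | .cons _ (.cons _ _) => simp

lemma Walk.exists_shorter_append_of_chord {x y u w : α} (p₁ : G.Walk x u) (p₂ : G.Walk u y)
    (hw : w ∈ p₂.support) (huw : G.Adj u w) (he : s(u, w) ∉ p₂.edges) :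
    ∃ q : G.Walk x y, q.length < (p₁.append p₂).length ∧ q.support ⊆ (p₁.append p₂).support := by
  classical
  have h1 : 1 < (p₂.takeUntil w hw).length := (p₂.takeUntil w hw).one_lt_length_of_adj huw
    fun h => he (p₂.edges_takeUntil_subset_edges hw h)
  refine ⟨p₁.append (Walk.cons huw (p₂.dropUntil w hw)), ?_, fun z hz => ?_⟩
  · have := congrArg Walk.length (p₂.take_spec hw)
    simp only [Walk.length_append, Walk.length_cons] at *
    omega
  · rw [Walk.mem_support_append_iff] at hz ⊢
    rw [Walk.support_cons, List.mem_cons] at hz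
    rcases hz with hz | rfl | hz
    exacts [Or.inl hz, Or.inr p₂.start_mem_support,
      Or.inr (p₂.support_dropUntil_subset_support hw hz)]

lemma Walk.exists_shorter_of_chord {x y u w : α} (p : G.Walk x y) (hu : u ∈ p.support)
    (hw : w ∈ p.support) (huw : G.Adj u w) (he : s(u, w) ∉ p.edges) :
    ∃ q : G.Walk x y, q.length < p.length ∧ q.support ⊆ p.support := by
  classical
  have hp := p.take_spec hu
  set p₁ := p.takeUntil u hu
  set p₂ := p.dropUntil u hu
  rw [← hp] at hw he ⊢
  rw [Walk.edges_append, List.mem_append, not_or] at he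
  rcases (Walk.mem_support_append_iff p₁ p₂).1 hw with hw | hw
  · obtain ⟨q, hq, hqsub⟩ := p₂.reverse.exists_shorter_append_of_chord p₁.reverse
      (by simpa using hw) huw (by simpa using he.1)
    refine ⟨q.reverse, ?_, fun z hz => ?_⟩
    · simpa [← Walk.reverse_append] using hq
    · simpa [← Walk.reverse_append] using hqsub (by simpa using hz)
  · exact p₁.exists_shorter_append_of_chord p₂ hw huw he.2

/-- Take a shortest walk inside `U`. -/
lemma Walk.exists_isPath_chordless {U : Set α} {x y : α} (p : G.Walk x y)
    (hp : ∀ z ∈ p.support, z ∈ U) :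
    ∃ q : G.Walk x y, q.IsPath ∧ (∀ z ∈ q.support, z ∈ U) ∧
      ∀ u ∈ q.support, ∀ w ∈ q.support, G.Adj u w → s(u, w) ∈ q.edges := by
  classical
  obtain ⟨q, hqU, hqmin⟩ := WellFounded.has_min (measure Walk.length).wf
    {q : G.Walk x y | ∀ z ∈ q.support, z ∈ U} ⟨p, hp⟩
  have hbU : ∀ z ∈ q.bypass.support, z ∈ U := fun z hz =>
    hqU z (q.support_bypass_subset_support hz)
  refine ⟨q.bypass, q.bypass_isPath, hbU, fun u hu w hw huw => by_contra fun he => ?_⟩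
  obtain ⟨r, hr, hrsub⟩ := q.bypass.exists_shorter_of_chord hu hw huw he
  exact hqmin r (fun z hz => hbU z (hrsub hz))
    (hr.trans_le q.length_bypass_le_length)

lemma Walk.IsPath.isCycle_append_of_subset {x y : α} {A B : Set α} {pA : G.Walk x y}
    {pB : G.Walk y x} (hpA : pA.IsPath) (hpB : pB.IsPath) (hAB : ∀ z ∈ A, z ∉ B)
    (hA : ∀ z ∈ pA.support, z ∈ insert x (insert y A))
    (hB : ∀ z ∈ pB.support, z ∈ insert y (insert x B)) (hxy : x ≠ y) (hadj : ¬ G.Adj x y) :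
    (pA.append pB).IsCycle ∧ 4 ≤ (pA.append pB).length := by
  have hlenA := pA.one_lt_length_of_not_adj hxy hadj
  have hlenB := pB.one_lt_length_of_not_adj hxy.symm fun h => hadj h.symm
  refine ⟨hpA.isCycle_append hpB (List.disjoint_left.2 fun z hzA hzB => ?_) (Or.inl hlenA),
    by rw [Walk.length_append]; omega⟩
  have hzx : z ≠ x := fun h =>
    (List.nodup_cons.1 (pA.cons_tail_support ▸ hpA.support_nodup)).1 (h ▸ hzA)
  have hzy : z ≠ y := fun h =>
    (List.nodup_cons.1 (pB.cons_tail_support ▸ hpB.support_nodup)).1 (h ▸ hzB)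
  rcases hA z (List.mem_of_mem_tail hzA) with h | h | hzA'
  · exact hzx h
  · exact hzy h
  rcases hB z (List.mem_of_mem_tail hzB) with h | h | hzB'
  · exact hzy h
  · exact hzx h
  exact hAB z hzA' hzB'

end ChordlessPath

variable {R : Set α}

lemma exists_walk_through_reachWithin {c x y x' y' : α} (hx' : x' ∈ G.reachWithin R c)
    (hy' : y' ∈ G.reachWithin R c) (hx : G.Adj x x') (hy : G.Adj y' y) :
    ∃ p : G.Walk x y, ∀ z ∈ p.support, z ∈ insert x (insert y (G.reachWithin R c)) := by
  obtain ⟨q, hq⟩ : y' ∈ G.reachWithin R x' := reachWithin_eq hx' ▸ hy'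
  refine ⟨Walk.cons hx (q.concat hy), fun z hz => ?_⟩
  rw [Walk.support_cons, Walk.support_concat, List.mem_cons, List.mem_append,
    List.mem_singleton] at hz
  rcases hz with rfl | hz | rfl
  · exact Or.inl rfl
  · exact Or.inr (Or.inr (reachWithin_eq hx' ▸ q.support_subset_reachWithin hq z hz))
  · exact Or.inr (Or.inl rfl)

/-- Two non-adjacent vertices of `S` would close, through the two components, a cycle without
chords. -/
lemma _root_.Chordal.isClique_of_forall_adj (hch : Chordal G) {S : Set α} {a b : α}
    (hab : b ∉ G.reachWithin R a)
    (hS : ∀ s ∈ S,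
      (∃ x ∈ G.reachWithin R a, G.Adj x s) ∧ ∃ x ∈ G.reachWithin R b, G.Adj x s) :
    G.IsClique S := by
  set Ca := G.reachWithin R a
  set Cb := G.reachWithin R b
  have hdisj : ∀ z ∈ Ca, z ∉ Cb := fun z hza hzb =>
    hab (mem_reachWithin_trans hza (mem_reachWithin_comm hzb))
  intro x hx y hy hxy
  by_contra hadj
  obtain ⟨⟨xa, hxa, hxxa⟩, ⟨xb, hxb, hxxb⟩⟩ := hS x hx
  obtain ⟨⟨ya, hya, hyya⟩, ⟨yb, hyb, hyyb⟩⟩ := hS y hy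
  obtain ⟨pA, hpA⟩ := exists_walk_through_reachWithin hxa hya hxxa.symm hyya
  obtain ⟨pA, hpA, hpAU, hpAc⟩ := pA.exists_isPath_chordless hpA
  obtain ⟨pB, hpB⟩ := exists_walk_through_reachWithin hyb hxb hyyb.symm hxxb
  obtain ⟨pB, hpB, hpBU, hpBc⟩ := pB.exists_isPath_chordless hpB
  have hA : ∀ z ∈ pA.support, z ∉ pB.support → z ∈ Ca := by
    intro z hzA hzB
    rcases hpAU z hzA with rfl | rfl | h
    exacts [absurd pB.end_mem_support hzB, absurd pB.start_mem_support hzB, h]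
  have hB : ∀ z ∈ pB.support, z ∉ pA.support → z ∈ Cb := by
    intro z hzB hzA
    rcases hpBU z hzB with rfl | rfl | h
    exacts [absurd pA.end_mem_support hzA, absurd pA.start_mem_support hzA, h]
  obtain ⟨hcyc, hlen⟩ := hpA.isCycle_append_of_subset hpB hdisj hpAU hpBU hxy hadj
  obtain ⟨u, hu, w, hw, huw, he⟩ := hch x _ hcyc hlen
  rw [Walk.edges_append, List.mem_append, not_or] at he
  rw [Walk.mem_support_append_iff] at hu hw
  by_cases huA : u ∈ pA.support <;> by_cases hwA : w ∈ pA.support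
  · exact he.1 (hpAc u huA w hwA huw)
  · have hwB := hw.resolve_left hwA
    by_cases huB : u ∈ pB.support
    · exact he.2 (hpBc u huB w hwB huw)
    · exact hdisj w (mem_reachWithin_of_adj (hA u huA huB) huw (reachWithin_subset (hB w hwB hwA)))
        (hB w hwB hwA)
  · have huB := hu.resolve_left huA
    by_cases hwB : w ∈ pB.support
    · exact he.2 (hpBc u huB w hwB huw)
    · exact hdisj u (mem_reachWithin_of_adj (hA w hwA hwB) huw.symm
        (reachWithin_subset (hB u huB huA))) (hB u huB huA)
  · exact he.2 (hpBc u (hu.resolve_left huA) w (hw.resolve_left hwA) huw)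

def IsSimplicialIn (G : SimpleGraph α) (W : Set α) (v : α) : Prop :=
  v ∈ W ∧ G.IsClique (W ∩ G.neighborSet v)

lemma _root_.IsUVSepWithin.symm {W S : Set α} {u v : α} (h : IsUVSepWithin G W S u v) :
    IsUVSepWithin G W S v u := by
  obtain ⟨hu, hv, huS, hvS, hadj, hsep⟩ := h
  refine ⟨hv, hu, hvS, huS, fun h => hadj h.symm, fun p hp => ?_⟩
  obtain ⟨w, hw, hwS⟩ := hsep p.reverse fun z hz => hp z (by simpa using hz)
  exact ⟨w, by simpa using hw, hwS⟩

lemma isUVSepWithin_diff_pair {W : Set α} {a b : α} (ha : a ∈ W) (hb : b ∈ W) (hab : a ≠ b)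
    (hadj : ¬ G.Adj a b) : IsUVSepWithin G W (W \ {a, b}) a b := by
  refine ⟨ha, hb, by simp, by simp, hadj, fun p hp => ?_⟩
  by_contra! hno
  have hpair : ∀ z ∈ p.support, z = a ∨ z = b := fun z hz =>
    or_iff_not_imp_left.2 (by simpa [hp z hz] using hno z hz)
  cases p with
  | nil => exact hab rfl
  | cons h q =>
    rcases hpair _ (List.mem_cons_of_mem _ q.start_mem_support) with rfl | rfl
    exacts [h.ne rfl, hadj h]

lemma _root_.IsUVSepWithin.notMem_reachWithin {W S : Set α} {a b : α}
    (hS : IsUVSepWithin G W S a b) : b ∉ G.reachWithin (W \ S) a := by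
  rintro ⟨q, hq⟩
  obtain ⟨z, hz, hzS⟩ := hS.2.2.2.2.2 q fun z hz => (hq z hz).1
  exact (hq z hz).2 hzS

lemma exists_minimal_isUVSepWithin [Finite α] {W : Set α} {a b : α} (ha : a ∈ W) (hb : b ∈ W)
    (hab : a ≠ b) (hadj : ¬ G.Adj a b) :
    ∃ S ⊆ W, IsUVSepWithin G W S a b ∧ ∀ s ∈ S, ¬ IsUVSepWithin G W (S \ {s}) a b := by
  obtain ⟨S, ⟨hSW, hS⟩, hSmin⟩ := WellFounded.has_min (measure Set.ncard).wf
    {S | S ⊆ W ∧ IsUVSepWithin G W S a b}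
    ⟨_, Set.sdiff_subset, isUVSepWithin_diff_pair ha hb hab hadj⟩
  exact ⟨S, hSW, hS, fun s hs hsep =>
    hSmin _ ⟨Set.sdiff_subset.trans hSW, hsep⟩ (Set.ncard_sdiff_singleton_lt_of_mem hs)⟩

/-- Otherwise `s` could be dropped from the separator. -/
lemma _root_.IsUVSepWithin.exists_adj_of_minimal {W S : Set α} {a b s : α}
    (hS : IsUVSepWithin G W S a b) (hmin : ¬ IsUVSepWithin G W (S \ {s}) a b) :
    ∃ x ∈ G.reachWithin (W \ S) a, G.Adj x s := by
  have hbC := hS.notMem_reachWithin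
  obtain ⟨ha, hb, haS, hbS, hadj, -⟩ := hS
  obtain ⟨p, hpW, hpS⟩ : ∃ p : G.Walk a b, (∀ z ∈ p.support, z ∈ W) ∧
      ∀ z ∈ p.support, z ∉ S \ {s} := by
    by_contra! h
    exact hmin ⟨ha, hb, fun h => haS h.1, fun h => hbS h.1, hadj, h⟩
  obtain ⟨z, hz, hzC, x, hx, hxz⟩ := p.exists_adj_notMem_reachWithin
    (mem_reachWithin_self (show a ∈ W \ S from ⟨ha, haS⟩)) hbC
  have hzS : z ∈ S := by_contra fun hzS => hzC (mem_reachWithin_of_adj hx hxz ⟨hpW z hz, hzS⟩)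
  obtain rfl : z = s := by simpa [hzS] using hpS z hz
  exact ⟨x, hx, hxz⟩

lemma _root_.Chordal.isClique_of_minimal {W S : Set α} {a b : α} (hch : Chordal G)
    (hS : IsUVSepWithin G W S a b) (hmin : ∀ s ∈ S, ¬ IsUVSepWithin G W (S \ {s}) a b) :
    G.IsClique S :=
  hch.isClique_of_forall_adj hS.notMem_reachWithin fun s hs =>
    ⟨hS.exists_adj_of_minimal (hmin s hs),
      hS.symm.exists_adj_of_minimal fun h => hmin s hs h.symm⟩

lemma IsSimplicialIn.of_reachWithin {W S : Set α} {c v : α}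
    (hv : v ∈ G.reachWithin (W \ S) c)
    (hsimp : IsSimplicialIn G (G.reachWithin (W \ S) c ∪ S) v) : IsSimplicialIn G W v := by
  have hnbr : ∀ x ∈ W, G.Adj v x → x ∈ G.reachWithin (W \ S) c ∪ S := fun x hx hvx => by
    by_cases hxS : x ∈ S
    exacts [Or.inr hxS, Or.inl (mem_reachWithin_of_adj hv hvx ⟨hx, hxS⟩)]
  refine ⟨(reachWithin_subset hv).1, hsimp.2.subset fun x hx => ?_⟩
  exact ⟨hnbr x hx.1 hx.2, hx.2⟩

lemma exists_isSimplicialIn_of_reachWithin {W S : Set α} {c : α} (hc : c ∈ W \ S)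
    (hS : G.IsClique S)
    (h : G.IsClique (G.reachWithin (W \ S) c ∪ S) ∨ ∃ u w,
      IsSimplicialIn G (G.reachWithin (W \ S) c ∪ S) u ∧
      IsSimplicialIn G (G.reachWithin (W \ S) c ∪ S) w ∧ u ≠ w ∧ ¬ G.Adj u w) :
    ∃ v ∈ G.reachWithin (W \ S) c, IsSimplicialIn G W v := by
  have hcC := mem_reachWithin_self (G := G) hc
  rcases h with h | ⟨u, w, hu, hw, huw, hadj⟩
  · exact ⟨c, hcC, IsSimplicialIn.of_reachWithin hcC
      ⟨Or.inl hcC, h.subset fun x hx => hx.1⟩⟩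
  · have : u ∉ S ∨ w ∉ S := by
      by_contra! h
      exact hadj (hS h.1 h.2 huw)
    rcases this with hu' | hw'
    · have huC := hu.1.resolve_right hu'
      exact ⟨u, huC, IsSimplicialIn.of_reachWithin huC hu⟩
    · have hwC := hw.1.resolve_right hw'
      exact ⟨w, hwC, IsSimplicialIn.of_reachWithin hwC hw⟩

/-- Dirac's lemma; the two simplicial vertices are found on either side of a minimal
separator, which is a clique. -/
theorem _root_.Chordal.isClique_or_exists_isSimplicialIn [Finite α] (hch : Chordal G)
    (W : Set α) : G.IsClique W ∨
      ∃ u w, IsSimplicialIn G W u ∧ IsSimplicialIn G W w ∧ u ≠ w ∧ ¬ G.Adj u w := by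
  induction hn : W.ncard using Nat.strong_induction_on generalizing W with
  | _ n ih =>
  by_cases hW : G.IsClique W
  · exact Or.inl hW
  right
  obtain ⟨a, ha, b, hb, hab, hadj⟩ : ∃ a ∈ W, ∃ b ∈ W, a ≠ b ∧ ¬ G.Adj a b := by
    simpa [IsClique, Set.Pairwise] using hW
  obtain ⟨S, hSW, hS, hmin⟩ := exists_minimal_isUVSepWithin ha hb hab hadj
  have hbC := hS.notMem_reachWithin
  have hSclique : G.IsClique S := hch.isClique_of_minimal hS hmin
  have hside : ∀ {c d : α}, c ∈ W \ S → d ∈ W \ S → d ∉ G.reachWithin (W \ S) c →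
      ∃ v ∈ G.reachWithin (W \ S) c, IsSimplicialIn G W v := by
    intro c d hc hd hdc
    refine exists_isSimplicialIn_of_reachWithin hc hSclique (ih _ ?_ _ rfl)
    refine hn ▸ Set.ncard_lt_ncard ⟨Set.union_subset (reachWithin_subset.trans Set.sdiff_subset)
      hSW, fun h => ?_⟩
    rcases h hd.1 with h | h
    exacts [hdc h, hd.2 h]
  obtain ⟨u, huC, hu⟩ := hside ⟨ha, hS.2.2.1⟩ ⟨hb, hS.2.2.2.1⟩ hbC
  obtain ⟨w, hwC, hw⟩ := hside ⟨hb, hS.2.2.2.1⟩ ⟨ha, hS.2.2.1⟩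
    fun h => hbC (mem_reachWithin_comm h)
  have hdisj : w ∉ G.reachWithin (W \ S) a := fun h =>
    hbC (mem_reachWithin_trans h (mem_reachWithin_comm hwC))
  exact ⟨u, w, hu, hw, fun h => hdisj (h ▸ huC),
    fun h => hdisj (mem_reachWithin_of_adj huC h (reachWithin_subset hwC))⟩

def IsMaxCliqueIn (G : SimpleGraph α) (W K : Set α) : Prop :=
  Maximal (fun K => K ⊆ W ∧ G.IsClique K) K

lemma isMaxCliqueIn_univ {K : Set α} : G.IsMaxCliqueIn Set.univ K ↔ IsMaxClique G K :=
  ⟨fun h => ⟨h.1.2, fun _ hK' hKK' => h.eq_of_superset ⟨Set.subset_univ _, hK'⟩ hKK'⟩,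
    fun h => ⟨⟨Set.subset_univ _, h.1⟩, fun _ hK' hKK' => (h.2 _ hK'.2 hKK').le⟩⟩

lemma subset_insert_inter_neighborSet {W K : Set α} {v : α} (hKW : K ⊆ W) (hK : G.IsClique K)
    (hvK : v ∈ K) :
    K ⊆ insert v (W ∩ G.neighborSet v) := fun x hx => by
  by_cases hxv : x = v
  · exact Or.inl hxv
  · exact Or.inr ⟨hKW hx, hK hvK hx (Ne.symm hxv)⟩

namespace IsSimplicialIn

variable {W K : Set α} {v : α} (hv : G.IsSimplicialIn W v)
include hv

lemma isMaxCliqueIn : G.IsMaxCliqueIn W (insert v (W ∩ G.neighborSet v)) :=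
  ⟨⟨Set.insert_subset hv.1 Set.inter_subset_left,
    isClique_insert.2 ⟨hv.2, fun _ hx _ => hx.2⟩⟩,
    fun _ hK hle => subset_insert_inter_neighborSet hK.1 hK.2 (hle (Set.mem_insert v _))⟩

lemma isMaxCliqueIn_iff :
    G.IsMaxCliqueIn W K ↔ K = insert v (W ∩ G.neighborSet v) ∨
      (G.IsMaxCliqueIn (W \ {v}) K ∧ K ≠ W ∩ G.neighborSet v) := by
  have hvN : v ∉ W ∩ G.neighborSet v := fun h => G.loopless.irrefl v h.2
  constructor
  · intro hK
    by_cases hvK : v ∈ K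
    · exact Or.inl (hK.eq_of_subset hv.isMaxCliqueIn.1
        (subset_insert_inter_neighborSet hK.1.1 hK.1.2 hvK))
    refine Or.inr ⟨⟨⟨fun x hx => ⟨hK.1.1 hx, fun h => hvK (h ▸ hx)⟩, hK.1.2⟩,
      fun K' hK' hKK' => hK.2 ⟨hK'.1.trans Set.sdiff_subset, hK'.2⟩ hKK'⟩, fun hKN => ?_⟩
    exact hvN (hKN ▸ hK.eq_of_subset hv.isMaxCliqueIn.1 (hKN ▸ Set.subset_insert _ _) ▸
      Set.mem_insert v _)
  · rintro (rfl | ⟨hK, hKN⟩)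
    · exact hv.isMaxCliqueIn
    refine ⟨⟨hK.1.1.trans Set.sdiff_subset, hK.1.2⟩, fun K' hK' hKK' => ?_⟩
    by_cases hvK' : v ∈ K'
    · refine absurd (hK.eq_of_subset (t := W ∩ G.neighborSet v)
        ⟨fun x hx => ⟨hx.1, fun h => hvN (h ▸ hx)⟩, hv.2⟩ fun x hx => ?_) hKN
      have hxv : x ≠ v := fun h => (hK.1.1 hx).2 h
      exact (subset_insert_inter_neighborSet hK'.1 hK'.2 hvK' (hKK' hx)).resolve_left hxv
    · exact hK.2 ⟨fun x hx => ⟨hK'.1 hx, fun h => hvK' (h ▸ hx)⟩, hK'.2⟩ hKK'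

/-- The closed neighbourhood of `v` replaces its open neighbourhood if the latter is a node, and
is hung below a maximal clique containing the open neighbourhood otherwise. -/
lemma exists_isCliqueTreeOn [Finite α] {rt : Set α} (hrt : G.IsMaxCliqueIn W rt)
    (hvrt : insert v (W ∩ G.neighborSet v) ≠ rt) {par : Set α → Set α} {dep : Set α → ℕ}
    (T : IsCliqueTreeOn (G.IsMaxCliqueIn (W \ {v})) par dep rt) :
    ∃ par dep, IsCliqueTreeOn (G.IsMaxCliqueIn W) par dep rt := by
  classical
  set N := W ∩ G.neighborSet v
  set Kv := insert v N
  have hiff : ∀ K, G.IsMaxCliqueIn W K ↔ K = Kv ∨ (G.IsMaxCliqueIn (W \ {v}) K ∧ K ≠ N) :=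
    fun K => hv.isMaxCliqueIn_iff
  have hvN : v ∉ N := fun h => G.loopless.irrefl v h.2
  have hKv : ¬ G.IsMaxCliqueIn (W \ {v}) Kv := fun h => (h.1.1 (Set.mem_insert v N)).2 rfl
  have hKvK : ∀ K, G.IsMaxCliqueIn (W \ {v}) K → Kv ∩ K ⊆ N := fun K hK x ⟨hxKv, hxK⟩ =>
    hxKv.resolve_left (hK.1.1 hxK).2
  by_cases hN : G.IsMaxCliqueIn (W \ {v}) N
  · have hP : G.IsMaxCliqueIn W = fun K => G.IsMaxCliqueIn (W \ {v}) (Equiv.swap N Kv K) := by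
      ext K
      rw [hiff]
      by_cases hKKv : K = Kv
      · simp [hKKv, hN]
      by_cases hKN : K = N
      · subst hKN
        simp [hKv, hKKv]
      · simp [Equiv.swap_apply_of_ne_of_ne hKN hKKv, hKKv, hKN]
    have hrtN : rt ≠ N := (((hiff rt).1 hrt).resolve_left (Ne.symm hvrt)).2
    have T' := T.replace hKv (Set.subset_insert v N) fun K hK _ => hKvK K hK
    rw [← hP, Equiv.swap_apply_of_ne_of_ne hrtN (Ne.symm hvrt)] at T'
    exact ⟨_, _, T'⟩
  · obtain ⟨M, hNM, hM⟩ :=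
      Finite.exists_le_maximal (p := fun K => K ⊆ W \ {v} ∧ G.IsClique K) (a := N)
        ⟨fun x hx => ⟨hx.1, fun h => hvN (h ▸ hx)⟩, hv.2⟩
    have hP : G.IsMaxCliqueIn W = fun K => K = Kv ∨ G.IsMaxCliqueIn (W \ {v}) K := by
      ext K
      rw [hiff]
      exact or_congr_right ⟨And.left, fun hK => ⟨hK, fun h => hN (h ▸ hK)⟩⟩
    exact ⟨_, _, hP ▸ T.attach hKv hM fun K hK => (hKvK K hK).trans hNM⟩

end IsSimplicialIn

section Components

variable {W S : Set α}

lemma mem_reachWithin_of_isClique {K : Set α} (hK : G.IsClique K) {c y z : α}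
    (hy : y ∈ G.reachWithin (W \ S) c) (hyK : y ∈ K) (hzK : z ∈ K) (hz : z ∈ W \ S) :
    z ∈ G.reachWithin (W \ S) c := by
  by_cases hyz : y = z
  · exact hyz ▸ hy
  · exact mem_reachWithin_of_adj hy (hK hyK hzK hyz) hz

lemma _root_.IsUVSepWithin.exists_reachWithin_disjoint {u v : α} (hS : IsUVSepWithin G W S u v)
    {K : Set α} (hK : G.IsClique K) {z : α} (hzK : z ∈ K) (hz : z ∈ W \ S) :
    ∃ c ∈ W \ S, ∀ y ∈ G.reachWithin (W \ S) c, y ∉ K := by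
  by_cases hzu : z ∈ G.reachWithin (W \ S) u
  · refine ⟨v, ⟨hS.2.1, hS.2.2.2.1⟩, fun y hy hyK => hS.notMem_reachWithin ?_⟩
    exact mem_reachWithin_trans hzu
      (mem_reachWithin_comm (mem_reachWithin_of_isClique hK hy hyK hzK hz))
  · exact ⟨u, ⟨hS.1, hS.2.2.1⟩, fun y hy hyK =>
      hzu (mem_reachWithin_of_isClique hK hy hyK hzK hz)⟩

lemma inter_subset_of_reachWithin {K K' : Set α} (hK : G.IsClique K) (hKW : K ⊆ W) {c d : α}
    (hd : d ∈ G.reachWithin (W \ S) c) (hdK : d ∈ K)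
    (hK' : ∀ y ∈ G.reachWithin (W \ S) c, y ∉ K') : K ∩ K' ⊆ S := by
  rintro w ⟨hwK, hwK'⟩
  by_contra hwS
  exact hK' w (mem_reachWithin_of_isClique hK hd hdK hwK ⟨hKW hwK, hwS⟩) hwK'

end Components

end SimpleGraph

/-- Induction on `W`, deleting a simplicial vertex whose closed neighbourhood is not the root. -/
theorem Chordal.exists_isCliqueTreeOn {α : Type*} [Finite α] {G : SimpleGraph α}
    (hch : Chordal G) (W : Set α) {rt : Set α} (hrt : G.IsMaxCliqueIn W rt) :
    ∃ par dep, IsCliqueTreeOn (G.IsMaxCliqueIn W) par dep rt := by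
  induction hn : W.ncard using Nat.strong_induction_on generalizing W rt with
  | _ n ih =>
  rcases hch.isClique_or_exists_isSimplicialIn W with hW | ⟨u, w, hu, hw, huw, hadj⟩
  · have hmax : ∀ K, G.IsMaxCliqueIn W K → K = W := fun K hK =>
      hK.eq_of_subset ⟨subset_rfl, hW⟩ hK.1.1
    exact ⟨id, _, .of_subsingleton hrt fun K hK => (hmax K hK).trans (hmax rt hrt).symm⟩
  obtain ⟨v, hv, hvrt⟩ :
      ∃ v, G.IsSimplicialIn W v ∧ insert v (W ∩ G.neighborSet v) ≠ rt := by
    by_cases hurt : insert u (W ∩ G.neighborSet u) = rt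
    · refine ⟨w, hw, fun hwrt => ?_⟩
      have : w ∈ insert u (W ∩ G.neighborSet u) := hurt ▸ hwrt ▸ Set.mem_insert w _
      exact this.elim (fun h => huw h.symm) fun h => hadj h.2
    · exact ⟨u, hu, hurt⟩
  have hrt' : G.IsMaxCliqueIn (W \ {v}) rt :=
    ((hv.isMaxCliqueIn_iff.1 hrt).resolve_left (Ne.symm hvrt)).1
  obtain ⟨par, dep, T⟩ := ih _ (hn ▸ Set.ncard_sdiff_singleton_lt_of_mem hv.1) _ hrt' rfl
  exact hv.exists_isCliqueTreeOn hrt hvrt T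

section Separator

variable {α β : Type*} {G : SimpleGraph α} {par : β → β} {dep : β → ℕ} {root : β}
  {Kf : β → Set α}

lemma not_subset_inter_parent (T : IsRootedTree par dep root) (hjt : IsJunctionTree par root Kf)
    (hclique : ∀ i, G.IsClique (Kf i)) (hanti : ∀ i j, Kf i ⊆ Kf j → i = j)
    (hrehang : ∀ k q, k ≠ root → IsAncestor par q k → dep q + 1 < dep k →
      ¬ Kf k ∩ Kf (par k) ⊆ Kf q)
    {i j : β} (hj : j ≠ root) (hpj : par j = par i) {S : Set α} {u v : α}
    (hS : IsUVSepWithin G (⋃ k ∈ {k | IsAncestor par j k}, Kf k) S u v) :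
    ¬ S ⊆ Kf i ∩ Kf (par i) := by
  set W := ⋃ k ∈ {k | IsAncestor par j k}, Kf k
  have hW : ∀ {x k}, IsAncestor par j k → x ∈ Kf k → x ∈ W := fun hjk hxk =>
    Set.mem_biUnion hjk hxk
  have hdepj : dep j = dep (par i) + 1 := hpj ▸ T.dep_eq j hj
  intro hsub
  obtain ⟨z, hzj, hzS⟩ : ∃ z ∈ Kf j, z ∉ S := by
    by_contra! h
    have := congrArg dep (hanti j (par i) fun z hz => (hsub (h z hz)).2)
    omega
  obtain ⟨c, hc, hcj⟩ := hS.exists_reachWithin_disjoint (hclique j) hzj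
    ⟨hW (IsAncestor.refl j) hzj, hzS⟩
  set D := G.reachWithin (W \ S) c
  obtain ⟨k, ⟨d, hdD, hdk⟩, hkmin⟩ := WellFounded.has_min (measure dep).wf
    {k | ∃ d ∈ D, d ∈ Kf k}
    (let ⟨k, _, hck⟩ := Set.mem_iUnion₂.1 hc.1; ⟨k, c, mem_reachWithin_self hc, hck⟩)
  have hbelow : ∀ {k d}, d ∈ D → d ∈ Kf k → IsAncestor par j k := fun hdD hdk => by
    by_contra hjk
    exact hcj _ hdD (hjt.mem_of_mem_biUnion T hdk hjk (reachWithin_subset hdD).1)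
  have hjk : IsAncestor par j k := hbelow hdD hdk
  have hkj : k ≠ j := fun h => hcj d hdD (h ▸ hdk)
  have hkroot : k ≠ root := fun h => hj (T.eq_root_of_isAncestor (h ▸ hjk))
  have hparD : ∀ y ∈ D, y ∉ Kf (par k) := fun y hyD hyk =>
    hkmin (par k) ⟨y, hyD, hyk⟩ (T.dep_parent_lt hkroot)
  refine hrehang k (par i) hkroot (hpj ▸ (IsAncestor.parent j).trans hjk)
    (hdepj ▸ T.dep_lt_of_isAncestor hjk (Ne.symm hkj)) fun w hw => (hsub ?_).2
  exact inter_subset_of_reachWithin (hclique k) (fun x hx => hW hjk hx)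
    hdD hdk hparD hw

end Separator

section MaxCliques

variable {α : Type*} [Finite α] {G : SimpleGraph α}

lemma exists_mem_maxCliques (v : α) : ∃ K : MaxCliques G, v ∈ K.1 := by
  obtain ⟨K, hvK, hK⟩ :=
    Finite.exists_le_maximal (p := fun K => K ⊆ Set.univ ∧ G.IsClique K) (a := {v})
      ⟨Set.subset_univ _, isClique_singleton v⟩
  exact ⟨⟨K, G.isMaxCliqueIn_univ.1 hK⟩, hvK rfl⟩

lemma exists_isJunctionTree (hch : Chordal G) (root : MaxCliques G) :
    ∃ (par : MaxCliques G → MaxCliques G) (dep : MaxCliques G → ℕ),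
      IsRootedTree par dep root ∧ IsJunctionTree par root Subtype.val := by
  obtain ⟨par, dep, T⟩ := hch.exists_isCliqueTreeOn Set.univ (G.isMaxCliqueIn_univ.2 root.2)
  rw [show G.IsMaxCliqueIn Set.univ = IsMaxClique G from
    funext fun K => propext G.isMaxCliqueIn_univ] at T
  exact T.exists_isRootedTree_isJunctionTree

/-- Take a clique tree of minimal total depth. -/
lemma exists_isJunctionTree_forall_not_subset (hch : Chordal G) (root : MaxCliques G) :
    ∃ (par : MaxCliques G → MaxCliques G) (dep : MaxCliques G → ℕ),
      IsRootedTree par dep root ∧ IsJunctionTree par root Subtype.val ∧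
      ∀ k q, k ≠ root → IsAncestor par q k → dep q + 1 < dep k →
        ¬ k.1 ∩ (par k).1 ⊆ q.1 := by
  classical
  have : Fintype (MaxCliques G) := Fintype.ofFinite _
  obtain ⟨par₀, dep₀, T₀, hjt₀⟩ := exists_isJunctionTree hch root
  obtain ⟨⟨par, dep⟩, ⟨T, hjt⟩, hmin⟩ :=
    WellFounded.has_min
      (measure fun t : (MaxCliques G → MaxCliques G) × (MaxCliques G → ℕ) => ∑ K, t.2 K).wf
      {t | IsRootedTree t.1 t.2 root ∧ IsJunctionTree t.1 root Subtype.val}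
      ⟨(par₀, dep₀), T₀, hjt₀⟩
  dsimp only at T hjt
  refine ⟨par, dep, T, hjt, fun k q hk hqk hdq hS => ?_⟩
  have hkq : ¬ IsAncestor par k q := fun h => (T.dep_le_of_isAncestor h).not_gt (by omega)
  obtain ⟨dep', T', hlt, hle⟩ := T.rehang hk hkq hdq
  exact hmin (Function.update par k q, dep') ⟨T', hjt.rehang T hk hkq hqk hS⟩
    (Finset.sum_lt_sum (fun K _ => hle K) ⟨k, Finset.mem_univ k, hlt⟩)

end MaxCliques

theorem stmt16_general {α : Type*} [Fintype α] (G : SimpleGraph α)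
    (hch : Chordal G) (root : MaxCliques G) :
    ∃ TG : SimpleGraph (MaxCliques G),
      TG.IsTree ∧
      (∀ v : α, (TG.induce {K : MaxCliques G | v ∈ K.1}).Connected) ∧
      ∃ parent : MaxCliques G → MaxCliques G,
        (∀ i, i ≠ root → TG.Adj i (parent i) ∧
          ∀ p : TG.Walk i root, p.IsPath → parent i ∈ p.support) ∧
        ∀ i, i ≠ root → ∀ j, j ≠ root → parent j = parent i →
          ∀ S : Set α,
            IsMinSepWithin G
              (⋃ K ∈ {K : MaxCliques G |
                  ∀ p : TG.Walk K root, p.IsPath → j ∈ p.support}, K.1) S →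
            ¬ S ⊆ i.1 ∩ (parent i).1 := by
  obtain ⟨par, dep, T, hjt, hrehang⟩ := exists_isJunctionTree_forall_not_subset hch root
  refine ⟨parentGraph par, T.isTree_parentGraph,
    fun v => hjt.connected_induce T (exists_mem_maxCliques v), par,
    fun i hi => ⟨T.adj_parent hi, T.isAncestor_iff_forall_isPath.2 (IsAncestor.parent i)⟩,
    fun i _ j hj hpj S hS => ?_⟩
  simp only [T.isAncestor_iff_forall_isPath] at hS
  obtain ⟨-, u, v, -, hsep, -⟩ := hS
  exact not_subset_inter_parent T hjt (fun K => K.2.1)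
    (fun K K' h => Subtype.ext (K.2.2 K'.1 K'.2.1 h).symm) hrehang hj hpj hsep

/-- Every connected chordal graph admits a clique-tree, rooted at an arbitrary
maximal clique, such that for every non-root clique `K_i` with parent
`K_{p(i)}` and separator `S_i = K_i ∩ K_{p(i)}`, and every child `K_j` of
`K_{p(i)}`, no minimal separator of the subgraph `G_j` induced by the union of
the maximal cliques in the subtree rooted at `K_j` is contained in `S_i`. -/
theorem stmt16 {α : Type*} [Fintype α] (G : SimpleGraph α)
    (hconn : G.Connected) (hch : Chordal G) (root : MaxCliques G) :
    ∃ TG : SimpleGraph (MaxCliques G),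
      TG.IsTree ∧
      (∀ v : α, (TG.induce {K : MaxCliques G | v ∈ K.1}).Connected) ∧
      ∃ parent : MaxCliques G → MaxCliques G,
        (∀ i, i ≠ root → TG.Adj i (parent i) ∧
          ∀ p : TG.Walk i root, p.IsPath → parent i ∈ p.support) ∧
        ∀ i, i ≠ root → ∀ j, j ≠ root → parent j = parent i →
          ∀ S : Set α,
            IsMinSepWithin G
              (⋃ K ∈ {K : MaxCliques G |
                  ∀ p : TG.Walk K root, p.IsPath → j ∈ p.support}, K.1) S →
            ¬ S ⊆ i.1 ∩ (parent i).1 :=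
  stmt16_general G hch root
end
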